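/- arXiv:1511.08064 — 9 statements merged into one kernel-verified Lean document; each statement's English description precedes it below -/
import Mathlib

section
/- Let p be a prime and R a commutative ring in which (p-1)! is invertible. Let x_1, …, x_k ∈ R and let I = (x_1, …, x_k) be the ideal they generate. Then ∏_{i=1}^{k} exp_p(x_i) - exp_p(x_1 + ⋯ + x_k) - σ_p(x_1, …, x_k) lies in I^{p+1}. -/
/-- The `p`-truncated exponential `exp_p(x) = ∑_{j=0}^{p-1} x^j / j!`. -/
noncomputable def truncExp (p : ℕ) {R : Type*} [CommRing R] (x : R) : R :=
  ∑ j ∈ Finset.range p, Ring.inverse ((Nat.factorial j : R)) * x ^ j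

/-- `σ_p(x_1, …, x_k) = ∑ x_1^{j_1} ⋯ x_k^{j_k} / (j_1! ⋯ j_k!)`, the sum ranging over
tuples `(j_1, …, j_k)` with `0 ≤ j_i ≤ p - 1` and `j_1 + ⋯ + j_k = p`. -/
noncomputable def truncSigma (p : ℕ) {R : Type*} [CommRing R] {k : ℕ} (x : Fin k → R) : R :=
  ∑ j ∈ (Fintype.piFinset fun _ : Fin k => Finset.range p).filter (fun j => ∑ i, j i = p),
    ∏ i, Ring.inverse ((Nat.factorial (j i) : R)) * x i ^ j i

open Finset

/-- `∏ exp_p(x_i) - exp_p(∑ x_i) - σ_p(x_1, …, x_k) ∈ I^{p+1}` where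
`I = (x_1, …, x_k)`. -/
theorem prod_truncExp_sub_truncExp_sum_sub_truncSigma_mem (p : ℕ) (hp : p.Prime)
    (R : Type*) [CommRing R] (hfac : IsUnit ((Nat.factorial (p - 1) : R)))
    (k : ℕ) (x : Fin k → R) :
    (∏ i, truncExp p (x i)) - truncExp p (∑ i, x i) - truncSigma p x
      ∈ Ideal.span (Set.range x) ^ (p + 1) := by
  set I : Ideal R := Ideal.span (Set.range x) with hI
  set T : Finset (Fin k → ℕ) := Fintype.piFinset fun _ : Fin k => Finset.range p with hT
  set f : (Fin k → ℕ) → R :=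
    fun j => ∏ i, Ring.inverse ((Nat.factorial (j i) : R)) * x i ^ j i with hf
  have hfact : ∀ n : ℕ, n < p → IsUnit ((Nat.factorial n : R)) := by
    intro n hn
    exact isUnit_of_dvd_unit
      (Nat.cast_dvd_cast (Nat.factorial_dvd_factorial (by omega))) hfac
  -- Step A: expand the product
  have hprod : (∏ i, truncExp p (x i)) = ∑ j ∈ T, f j := by
    simp only [truncExp, hT, hf]
    rw [Finset.prod_univ_sum]
  -- Step B: split the sum into three parts
  have hsplit : ∑ j ∈ T, f j
      = (∑ j ∈ T.filter (fun j => ∑ i, j i < p), f j)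
        + truncSigma p x
        + ∑ j ∈ T.filter (fun j => p < ∑ i, j i), f j := by
    rw [← Finset.sum_filter_add_sum_filter_not T (fun j => ∑ i, j i < p) f]
    rw [← Finset.sum_filter_add_sum_filter_not
      (T.filter (fun j => ¬ ∑ i, j i < p)) (fun j => ∑ i, j i = p) f]
    rw [Finset.filter_filter, Finset.filter_filter]
    have h1 : (T.filter fun j => ¬ ∑ i, j i < p ∧ ∑ i, j i = p)
        = T.filter (fun j => ∑ i, j i = p) := by
      apply Finset.filter_congr
      intro j _
      constructor
      · rintro ⟨_, h⟩; exact h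
      · intro h; exact ⟨by omega, h⟩
    have h2 : (T.filter fun j => ¬ ∑ i, j i < p ∧ ¬ ∑ i, j i = p)
        = T.filter (fun j => p < ∑ i, j i) := by
      apply Finset.filter_congr
      intro j _
      constructor
      · rintro ⟨h1, h2⟩; omega
      · intro h; omega
    rw [h1, h2, truncSigma]
    ring
  -- key factorial identity
  have key : ∀ n : ℕ, n < p → ∀ j : Fin k → ℕ, (∑ i, j i) = n →
      ∏ i, Ring.inverse ((Nat.factorial (j i) : R)) =
        Ring.inverse ((Nat.factorial n : R)) * (Nat.multinomial Finset.univ j : R) := by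
    intro n hn j hj
    have hji : ∀ i, j i ≤ n := by
      intro i
      rw [← hj]
      exact Finset.single_le_sum (fun _ _ => Nat.zero_le _) (Finset.mem_univ i)
    have hnu : IsUnit ((Nat.factorial n : R)) := hfact n hn
    apply hnu.mul_left_cancel
    have hspec : (∏ i, Nat.factorial (j i)) * Nat.multinomial Finset.univ j
        = Nat.factorial n := by
      rw [Nat.multinomial_spec, hj]
    calc (Nat.factorial n : R) * ∏ i, Ring.inverse ((Nat.factorial (j i) : R))
        = ((∏ i, Nat.factorial (j i)) * Nat.multinomial Finset.univ j : ℕ)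
          * ∏ i, Ring.inverse ((Nat.factorial (j i) : R)) := by rw [hspec]
      _ = (Nat.multinomial Finset.univ j : R)
          * ∏ i, ((Nat.factorial (j i) : R) * Ring.inverse ((Nat.factorial (j i) : R))) := by
          push_cast
          rw [Finset.prod_mul_distrib]
          ring
      _ = (Nat.multinomial Finset.univ j : R) := by
          rw [Finset.prod_congr rfl
            (fun i _ => Ring.mul_inverse_cancel _ (hfact (j i) (by have := hji i; omega)))]
          simp
      _ = (Nat.factorial n : R)
          * (Ring.inverse ((Nat.factorial n : R)) * (Nat.multinomial Finset.univ j : R)) := by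
          rw [← mul_assoc, Ring.mul_inverse_cancel _ hnu, one_mul]
  -- Step C: the low part equals truncExp p (∑ x i)
  have hA : ∑ j ∈ T.filter (fun j => ∑ i, j i < p), f j = truncExp p (∑ i, x i) := by
    rw [truncExp]
    rw [← Finset.sum_fiberwise_of_maps_to
      (g := fun j : Fin k → ℕ => ∑ i, j i) (t := Finset.range p)
      (fun j hj => Finset.mem_range.mpr (Finset.mem_filter.mp hj).2) f]
    apply Finset.sum_congr rfl
    intro n hn
    rw [Finset.mem_range] at hn
    have hset : ((T.filter fun j => ∑ i, j i < p).filter fun j => ∑ i, j i = n)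
        = Finset.piAntidiag Finset.univ n := by
      ext j
      simp only [Finset.mem_filter, Finset.mem_piAntidiag, hT, Fintype.mem_piFinset,
        Finset.mem_range, Finset.mem_univ, implies_true, and_true]
      constructor
      · rintro ⟨⟨_, _⟩, h⟩; exact h
      · intro h
        have h' : ∑ i, j i = n := h
        have hji : ∀ i, j i ≤ n := by
          intro i
          rw [← h']
          exact Finset.single_le_sum (fun _ _ => Nat.zero_le _) (Finset.mem_univ i)
        exact ⟨⟨fun i => lt_of_le_of_lt (hji i) hn, by rw [h']; exact hn⟩, h⟩
    rw [hset, Finset.sum_pow_eq_sum_piAntidiag, Finset.mul_sum]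
    apply Finset.sum_congr rfl
    intro j hj
    rw [Finset.mem_piAntidiag] at hj
    have hjn : ∑ i, j i = n := hj.1
    simp only [hf]
    rw [Finset.prod_mul_distrib, key n hn j hjn]
    ring
  -- Step D: the high part lies in I^(p+1)
  have hC : ∑ j ∈ T.filter (fun j => p < ∑ i, j i), f j ∈ I ^ (p + 1) := by
    apply Ideal.sum_mem
    intro j hj
    rw [Finset.mem_filter] at hj
    simp only [hf]
    rw [Finset.prod_mul_distrib]
    apply Ideal.mul_mem_left
    have h1 : (∏ i, x i ^ j i) ∈ I ^ (∑ i, j i) := by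
      rw [← Finset.prod_pow_eq_pow_sum]
      exact Ideal.prod_mem_prod fun i _ =>
        Ideal.pow_mem_pow (Ideal.subset_span (Set.mem_range_self i)) _
    exact Ideal.pow_le_pow_right (by omega) h1
  -- assemble
  rw [hprod, hsplit, hA]
  have : truncExp p (∑ i, x i) + truncSigma p x +
      (∑ j ∈ T.filter (fun j => p < ∑ i, j i), f j) - truncExp p (∑ i, x i) -
      truncSigma p x = ∑ j ∈ T.filter (fun j => p < ∑ i, j i), f j := by ring
  rw [this]
  exact hC
end

section
/- Let p be a prime and R a commutative ring in which (p-1)! is invertible. Let y_0, y_1, …, y_n ∈ R and let I = (y_0, …, y_n) be the ideal they generate. Then exp_p(∑_{i=0}^{n} (-1)^i y_i) · ∏_{0 ≤ i ≤ n, i odd} exp_p(y_i) - (1 - μ_p(y_0, …, y_n)) · ∏_{0 ≤ i ≤ n, i even} exp_p(y_i) lies in I^{p+1}. -/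
/-- `μ_p(y_0, …, y_n) = σ_p(y_0, -y_1, …, (-1)^n y_n) - ∑_{i odd} σ_p(y_i, -y_i)`. -/
noncomputable def truncMu (p : ℕ) {R : Type*} [CommRing R] {n : ℕ} (y : Fin (n + 1) → R) : R :=
  truncSigma p (fun i => (-1) ^ (i : ℕ) * y i) -
    ∑ i ∈ Finset.univ.filter (fun i : Fin (n + 1) => Odd (i : ℕ)),
      truncSigma p ![y i, -y i]


open Finset

section Aux

variable {p : ℕ} {R : Type*} [CommRing R]

lemma facUnit (hfac : IsUnit ((Nat.factorial (p - 1) : R))) {j : ℕ} (hj : j < p) :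
    IsUnit ((Nat.factorial j : R)) := by
  obtain ⟨c, hc⟩ := Nat.factorial_dvd_factorial (Nat.le_pred_of_lt hj)
  exact isUnit_of_mul_isUnit_left (y := (c : R)) (by rw [← Nat.cast_mul, ← hc]; exact hfac)

lemma truncExpSum (hp : 0 < p) (hfac : IsUnit ((Nat.factorial (p - 1) : R))) {k : ℕ}
    (x : Fin k → R) :
    truncExp p (∑ i, x i) =
      ∑ j ∈ (Fintype.piFinset fun _ : Fin k => Finset.range p).filter (fun j => ∑ i, j i < p),
        ∏ i, Ring.inverse ((Nat.factorial (j i) : R)) * x i ^ j i := by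
  classical
  have hset : (Fintype.piFinset fun _ : Fin k => Finset.range p).filter (fun j => ∑ i, j i < p)
      = (Finset.range p).biUnion (fun m => Finset.piAntidiag Finset.univ m) := by
    ext j
    simp only [Finset.mem_filter, Fintype.mem_piFinset, Finset.mem_range, Finset.mem_biUnion,
      Finset.mem_piAntidiag, Finset.mem_univ, implies_true, and_true]
    constructor
    · rintro ⟨h1, h2⟩; exact ⟨_, h2, rfl⟩
    · rintro ⟨m, hm, rfl⟩
      refine ⟨fun i => lt_of_le_of_lt ?_ hm, hm⟩
      exact Finset.single_le_sum (fun _ _ => Nat.zero_le _) (Finset.mem_univ i)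
  rw [hset, Finset.sum_biUnion]
  · unfold truncExp
    refine Finset.sum_congr rfl fun m hm => ?_
    rw [Finset.mem_range] at hm
    rw [Finset.sum_pow_eq_sum_piAntidiag, Finset.mul_sum]
    refine Finset.sum_congr rfl fun j hj => ?_
    rw [Finset.mem_piAntidiag] at hj
    have hjle : ∀ i : Fin k, j i < p := fun i =>
      lt_of_le_of_lt (hj.1 ▸ Finset.single_le_sum (f := j) (fun _ _ => Nat.zero_le _)
        (Finset.mem_univ i)) hm
    have hui : ∀ i : Fin k, IsUnit ((Nat.factorial (j i) : R)) := fun i => facUnit hfac (hjle i)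
    have hu : IsUnit (∏ i, ((Nat.factorial (j i) : R))) :=
      Finset.prod_induction _ IsUnit (fun a b ha hb => ha.mul hb) isUnit_one fun i _ => hui i
    rw [Finset.prod_mul_distrib, ← mul_assoc]
    congr 1
    refine hu.mul_left_cancel ?_
    have h1 : (∏ i, ((Nat.factorial (j i) : R))) *
        (Ring.inverse ((Nat.factorial m : R)) * (Nat.multinomial Finset.univ j : R)) = 1 := by
      rw [mul_left_comm, ← Nat.cast_prod, ← Nat.cast_mul, Nat.multinomial_spec, hj.1,
        Ring.inverse_mul_cancel _ (facUnit hfac hm)]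
    have h2 : (∏ i, ((Nat.factorial (j i) : R))) *
        (∏ i, Ring.inverse ((Nat.factorial (j i) : R))) = 1 := by
      rw [← Finset.prod_mul_distrib]
      exact Finset.prod_eq_one fun i _ => Ring.mul_inverse_cancel _ (hui i)
    rw [h1, h2]
  · intro m _ m' _ hmm'
    simp only [Finset.disjoint_left, Finset.mem_piAntidiag]
    rintro j ⟨rfl, -⟩ ⟨h, -⟩
    exact hmm' h

lemma prodPowMem {J : Ideal R} {k : ℕ} (x : Fin k → R) (hx : ∀ i, x i ∈ J) (j : Fin k → ℕ) :
    (∏ i, Ring.inverse ((Nat.factorial (j i) : R)) * x i ^ j i) ∈ J ^ (∑ i, j i) := by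
  rw [Finset.prod_mul_distrib, ← Finset.prod_pow_eq_pow_sum]
  exact Ideal.mul_mem_left _ _ (Ideal.prod_mem_prod fun i _ => Ideal.pow_mem_pow (hx i) _)

lemma truncSigmaMem {J : Ideal R} {k : ℕ} (x : Fin k → R) (hx : ∀ i, x i ∈ J) :
    truncSigma p x ∈ J ^ p := by
  refine Ideal.sum_mem _ fun j hj => ?_
  rw [Finset.mem_filter] at hj
  rw [← hj.2]
  exact prodPowMem x hx j

lemma keyLemma (hp : 0 < p) (hfac : IsUnit ((Nat.factorial (p - 1) : R))) {k : ℕ}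
    {J : Ideal R} (x : Fin k → R) (hx : ∀ i, x i ∈ J) :
    (∏ i, truncExp p (x i)) - truncExp p (∑ i, x i) - truncSigma p x ∈ J ^ (p + 1) := by
  classical
  set S := Fintype.piFinset fun _ : Fin k => Finset.range p with hS
  set F : (Fin k → ℕ) → R := fun j => ∏ i, Ring.inverse ((Nat.factorial (j i) : R)) * x i ^ j i
    with hF
  have hprod : ∏ i, truncExp p (x i) = ∑ j ∈ S, F j := by
    unfold truncExp
    exact Finset.prod_univ_sum _ _
  have hsplit : ∑ j ∈ S, F j =
      (∑ j ∈ S.filter (fun j => ∑ i, j i < p), F j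
        + ∑ j ∈ S.filter (fun j => ∑ i, j i = p), F j)
        + ∑ j ∈ S.filter (fun j => p < ∑ i, j i), F j := by
    rw [← Finset.sum_filter_add_sum_filter_not S (fun j => ∑ i, j i ≤ p)]
    congr 1
    · rw [← Finset.sum_filter_add_sum_filter_not (S.filter (fun j => ∑ i, j i ≤ p))
        (fun j => ∑ i, j i < p), Finset.filter_filter, Finset.filter_filter]
      congr 1
      · exact Finset.sum_congr (Finset.filter_congr fun j _ => by omega) fun _ _ => rfl
      · exact Finset.sum_congr (Finset.filter_congr fun j _ => by omega) fun _ _ => rfl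
    · exact Finset.sum_congr (Finset.filter_congr fun j _ => by omega) fun _ _ => rfl
  have heq : (∏ i, truncExp p (x i)) - truncExp p (∑ i, x i) - truncSigma p x
      = ∑ j ∈ S.filter (fun j => p < ∑ i, j i), F j := by
    rw [hprod, truncExpSum hp hfac, hsplit]
    unfold truncSigma
    rw [← hS, ← hF]
    ring
  rw [heq]
  refine Ideal.sum_mem _ fun j hj => ?_
  rw [Finset.mem_filter] at hj
  exact Ideal.pow_le_pow_right hj.2 (prodPowMem x hx j)

lemma truncExpZero (hp : 0 < p) : truncExp p (0 : R) = 1 := by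
  obtain ⟨q, rfl⟩ := Nat.exists_eq_succ_of_ne_zero hp.ne'
  simp [truncExp, Finset.sum_range_succ']

lemma truncExpSubOneMem (hp : 0 < p) {J : Ideal R} {z : R} (hz : z ∈ J) :
    truncExp p z - 1 ∈ J := by
  obtain ⟨q, rfl⟩ := Nat.exists_eq_succ_of_ne_zero hp.ne'
  unfold truncExp
  rw [Finset.sum_range_succ']
  simp only [Nat.factorial_zero, Nat.cast_one, Ring.inverse_one, pow_zero, mul_one,
    add_sub_cancel_right]
  refine Ideal.sum_mem _ fun j _ => ?_
  rw [pow_succ]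
  exact Ideal.mul_mem_left _ _ (Ideal.mul_mem_left _ _ hz)

lemma prodSubOneMem {J : Ideal R} {ι : Type*} (s : Finset ι) (f : ι → R)
    (h : ∀ i ∈ s, f i - 1 ∈ J) : (∏ i ∈ s, f i) - 1 ∈ J := by
  classical
  induction s using Finset.induction_on with
  | empty => simp
  | @insert b s hb ih =>
    rw [Finset.prod_insert hb]
    have h1 := h b (Finset.mem_insert_self _ _)
    have h2 := ih fun i hi => h i (Finset.mem_insert_of_mem hi)
    have : f b * (∏ i ∈ s, f i) - 1
        = (f b - 1) * (∏ i ∈ s, f i) + ((∏ i ∈ s, f i) - 1) := by ring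
    rw [this]
    exact Ideal.add_mem _ (Ideal.mul_mem_right _ _ h1) h2

lemma prodOneAdd {Q : Type*} [CommRing Q] {ι : Type*} (s : Finset ι) (a : ι → Q)
    (h : ∀ i ∈ s, ∀ j ∈ s, a i * a j = 0) :
    ∏ i ∈ s, (1 + a i) = 1 + ∑ i ∈ s, a i := by
  classical
  induction s using Finset.induction_on with
  | empty => simp
  | @insert b s hb ih =>
    rw [Finset.prod_insert hb, Finset.sum_insert hb,
      ih fun i hi j hj => h i (Finset.mem_insert_of_mem hi) j (Finset.mem_insert_of_mem hj)]
    have hz : a b * ∑ i ∈ s, a i = 0 := by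
      rw [Finset.mul_sum]
      exact Finset.sum_eq_zero fun i hi =>
        h b (Finset.mem_insert_self _ _) i (Finset.mem_insert_of_mem hi)
    linear_combination hz

end Aux

/-- `exp_p(∑ (-1)^i y_i) · ∏_{i odd} exp_p(y_i) - (1 - μ_p(y)) · ∏_{i even} exp_p(y_i) ∈ I^{p+1}`
where `I = (y_0, …, y_n)`. -/
theorem truncExp_alternating_sum_mem (p n : ℕ) (hp : p.Prime) (R : Type*) [CommRing R]
    (hfac : IsUnit ((Nat.factorial (p - 1) : R))) (y : Fin (n + 1) → R) :
    truncExp p (∑ i : Fin (n + 1), (-1) ^ (i : ℕ) * y i) *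
        ∏ i ∈ Finset.univ.filter (fun i : Fin (n + 1) => Odd (i : ℕ)), truncExp p (y i) -
      (1 - truncMu p y) *
        ∏ i ∈ Finset.univ.filter (fun i : Fin (n + 1) => Even (i : ℕ)), truncExp p (y i)
      ∈ Ideal.span (Set.range y) ^ (p + 1) := by
  classical
  have hp1 : 0 < p := hp.pos
  set J : Ideal R := Ideal.span (Set.range y) with hJ
  set K : Ideal R := J ^ (p + 1) with hK
  have hyJ : ∀ i, y i ∈ J := fun i => Ideal.subset_span ⟨i, rfl⟩
  have hxJ : ∀ i : Fin (n + 1), (-1 : R) ^ (i : ℕ) * y i ∈ J :=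
    fun i => Ideal.mul_mem_left _ _ (hyJ i)
  have hpairJ : ∀ i : Fin (n + 1), ∀ j : Fin 2, (![y i, -y i]) j ∈ J := by
    intro i j
    fin_cases j
    · exact hyJ i
    · exact J.neg_mem (hyJ i)
  set O : Finset (Fin (n + 1)) := Finset.univ.filter (fun i : Fin (n + 1) => Odd (i : ℕ))
    with hO
  set Ev : Finset (Fin (n + 1)) := Finset.univ.filter (fun i : Fin (n + 1) => Even (i : ℕ))
    with hEv
  set σ : R := truncSigma p (fun i : Fin (n + 1) => (-1) ^ (i : ℕ) * y i) with hσ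
  set s : Fin (n + 1) → R := fun i => truncSigma p ![y i, -y i] with hs
  have hσJ : σ ∈ J ^ p := truncSigmaMem _ hxJ
  have hsJ : ∀ i, s i ∈ J ^ p := fun i => truncSigmaMem _ (hpairJ i)
  have hμdef : truncMu p y = σ - ∑ i ∈ O, s i := rfl
  have hμJ : truncMu p y ∈ J ^ p := by
    rw [hμdef]
    exact Ideal.sub_mem _ hσJ (Ideal.sum_mem _ fun i _ => hsJ i)
  rw [← Ideal.Quotient.eq]
  have key1 := keyLemma hp1 hfac (J := J) (fun i : Fin (n + 1) => (-1 : R) ^ (i : ℕ) * y i) hxJ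
  have hsplitprod : (∏ i : Fin (n + 1), truncExp p ((-1 : R) ^ (i : ℕ) * y i))
      = (∏ i ∈ O, truncExp p (-y i)) * ∏ i ∈ Ev, truncExp p (y i) := by
    rw [← Finset.prod_filter_mul_prod_filter_not Finset.univ
      (fun i : Fin (n + 1) => Odd (i : ℕ))]
    congr 1
    · refine Finset.prod_congr rfl fun i hi => ?_
      rw [Finset.mem_filter] at hi
      rw [Odd.neg_one_pow hi.2, neg_one_mul]
    · refine Finset.prod_congr ?_ fun i hi => ?_
      · exact Finset.filter_congr fun i _ => by rw [Nat.not_odd_iff_even]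
      · rw [hEv, Finset.mem_filter] at hi
        rw [Even.neg_one_pow hi.2, one_mul]
  have e1 : (Ideal.Quotient.mk K) (∏ i ∈ O, truncExp p (-y i)) *
        (Ideal.Quotient.mk K) (∏ i ∈ Ev, truncExp p (y i))
      = (Ideal.Quotient.mk K) (truncExp p (∑ i : Fin (n + 1), (-1) ^ (i : ℕ) * y i)) +
        (Ideal.Quotient.mk K) σ := by
    rw [← map_mul, ← map_add, Ideal.Quotient.eq, ← hsplitprod, ← sub_sub]
    exact key1
  have e2 : ∀ i : Fin (n + 1),
      (Ideal.Quotient.mk K) (truncExp p (-y i) * truncExp p (y i))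
        = 1 + (Ideal.Quotient.mk K) (s i) := by
    intro i
    have h := keyLemma hp1 hfac (J := J) ![y i, -y i] (hpairJ i)
    have hp2 : (∏ j : Fin 2, truncExp p ((![y i, -y i]) j))
        = truncExp p (y i) * truncExp p (-y i) := by
      rw [Fin.prod_univ_two]; simp
    have hs2 : (∑ j : Fin 2, (![y i, -y i]) j) = 0 := by
      rw [Fin.sum_univ_two]; simp
    rw [hp2, hs2, truncExpZero hp1, sub_sub] at h
    calc (Ideal.Quotient.mk K) (truncExp p (-y i) * truncExp p (y i))
        = (Ideal.Quotient.mk K) (1 + truncSigma p ![y i, -y i]) := by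
          rw [Ideal.Quotient.eq, mul_comm]; exact h
      _ = 1 + (Ideal.Quotient.mk K) (s i) := by rw [map_add, map_one, hs]
  have hzero : ∀ i j : Fin (n + 1),
      (Ideal.Quotient.mk K) (s i) * (Ideal.Quotient.mk K) (s j) = 0 := by
    intro i j
    rw [← map_mul, Ideal.Quotient.eq_zero_iff_mem]
    have h : s i * s j ∈ J ^ p * J ^ p := Ideal.mul_mem_mul (hsJ i) (hsJ j)
    rw [← pow_add] at h
    exact Ideal.pow_le_pow_right (by omega) h
  have e2' : (Ideal.Quotient.mk K) (∏ i ∈ O, truncExp p (-y i)) *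
        (Ideal.Quotient.mk K) (∏ i ∈ O, truncExp p (y i))
      = 1 + ∑ i ∈ O, (Ideal.Quotient.mk K) (s i) := by
    rw [← map_mul, ← Finset.prod_mul_distrib, map_prod]
    rw [Finset.prod_congr rfl fun i (_ : i ∈ O) => e2 i]
    exact prodOneAdd _ _ fun i _ j _ => hzero i j
  have absorb : ∀ a b : R, a - 1 ∈ J → b ∈ J ^ p →
      (Ideal.Quotient.mk K) (a * b) = (Ideal.Quotient.mk K) b := by
    intro a b ha hb
    rw [Ideal.Quotient.eq]
    have h : a * b - b = (a - 1) * b := by ring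
    rw [h, hK, pow_succ']
    exact Ideal.mul_mem_mul ha hb
  have hPo1 : (∏ i ∈ O, truncExp p (y i)) - 1 ∈ J :=
    prodSubOneMem _ _ fun i _ => truncExpSubOneMem hp1 (hyJ i)
  have hPe1 : (∏ i ∈ Ev, truncExp p (y i)) - 1 ∈ J :=
    prodSubOneMem _ _ fun i _ => truncExpSubOneMem hp1 (hyJ i)
  have e3 : (Ideal.Quotient.mk K) (∏ i ∈ Ev, truncExp p (y i)) *
        (∑ i ∈ O, (Ideal.Quotient.mk K) (s i)) = ∑ i ∈ O, (Ideal.Quotient.mk K) (s i) := by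
    rw [Finset.mul_sum]
    exact Finset.sum_congr rfl fun i _ => by
      rw [← map_mul]; exact absorb _ _ hPe1 (hsJ i)
  have e4 : (Ideal.Quotient.mk K) (∏ i ∈ O, truncExp p (y i)) * (Ideal.Quotient.mk K) σ
      = (Ideal.Quotient.mk K) σ := by
    rw [← map_mul]; exact absorb _ _ hPo1 hσJ
  have e5 : (Ideal.Quotient.mk K) (∏ i ∈ Ev, truncExp p (y i)) *
        (Ideal.Quotient.mk K) (truncMu p y) = (Ideal.Quotient.mk K) (truncMu p y) := by
    rw [← map_mul]; exact absorb _ _ hPe1 hμJ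
  have h6 : (Ideal.Quotient.mk K) (truncMu p y)
      = (Ideal.Quotient.mk K) σ - ∑ i ∈ O, (Ideal.Quotient.mk K) (s i) := by
    rw [hμdef, map_sub, map_sum]
  rw [map_mul, map_mul, map_sub, map_one]
  linear_combination (-(Ideal.Quotient.mk K (∏ i ∈ O, truncExp p (y i)))) * e1 +
    (Ideal.Quotient.mk K (∏ i ∈ Ev, truncExp p (y i))) * e2' + e3 - e4 + e5 + h6
end

section
/- Let p be a prime and R a commutative ring in which (p-1)! is invertible, let I ⊆ R be an ideal and k ≥ 1 an integer. Then for all x, y ∈ I^k, the element exp_p(x + y) - exp_p(x)·exp_p(y) lies in I^{pk}. -/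
/-- for `x, y ∈ I^k`, `exp_p(x + y) - exp_p(x) · exp_p(y) ∈ I^{pk}`. -/
theorem truncExp_add_sub_mul_mem (p : ℕ) (hp : p.Prime) (R : Type*) [CommRing R]
    (hfac : IsUnit ((Nat.factorial (p - 1) : R))) (I : Ideal R) (k : ℕ) (hk : 1 ≤ k) :
    ∀ x ∈ I ^ k, ∀ y ∈ I ^ k,
      truncExp p (x + y) - truncExp p x * truncExp p y ∈ I ^ (p * k) := by
  intro x hx y hy
  -- units
  have hunit : ∀ j, j < p → IsUnit ((Nat.factorial j : R)) := by
    intro j hj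
    refine isUnit_of_dvd_unit ?_ hfac
    exact_mod_cast Nat.cast_dvd_cast (Nat.factorial_dvd_factorial (Nat.le_sub_one_of_lt hj))
  set f : ℕ × ℕ → R := fun q =>
    Ring.inverse ((Nat.factorial q.1 : R)) * Ring.inverse ((Nat.factorial q.2 : R)) *
      (x ^ q.1 * y ^ q.2) with hf
  set S : Finset (ℕ × ℕ) := Finset.range p ×ˢ Finset.range p with hS
  -- product of exponentials
  have hA : truncExp p x * truncExp p y = ∑ q ∈ S, f q := by
    rw [truncExp, truncExp, Finset.sum_mul_sum, hS, Finset.sum_product]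
    apply Finset.sum_congr rfl; intro i _
    apply Finset.sum_congr rfl; intro j _
    simp [hf]; ring
  -- key identity for inverses of factorials
  have hkey : ∀ n, n < p → ∀ i, i ≤ n →
      Ring.inverse ((Nat.factorial n : R)) * (n.choose i : R) =
        Ring.inverse ((Nat.factorial i : R)) * Ring.inverse ((Nat.factorial (n - i) : R)) := by
    intro n hn i hi
    have h1 : ((n.choose i : ℕ) : R) * (Nat.factorial i : R) * (Nat.factorial (n - i) : R)
        = (Nat.factorial n : R) := by
      rw [← Nat.cast_mul, ← Nat.cast_mul, Nat.choose_mul_factorial_mul_factorial hi]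
    have hi' := hunit i (lt_of_le_of_lt hi hn)
    have hj' := hunit (n - i) (lt_of_le_of_lt (Nat.sub_le n i) hn)
    have hn' := hunit n hn
    have h2 : (n.choose i : R) = Ring.inverse ((Nat.factorial i : R)) *
        Ring.inverse ((Nat.factorial (n - i) : R)) * (Nat.factorial n : R) := by
      rw [← h1, show Ring.inverse ((Nat.factorial i : R)) *
          Ring.inverse ((Nat.factorial (n - i) : R)) *
          ((n.choose i : R) * (Nat.factorial i : R) * (Nat.factorial (n - i) : R)) =
          (n.choose i : R) * (Ring.inverse ((Nat.factorial i : R)) * (Nat.factorial i : R)) *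
          (Ring.inverse ((Nat.factorial (n - i) : R)) * (Nat.factorial (n - i) : R)) by ring,
        Ring.inverse_mul_cancel _ hi', Ring.inverse_mul_cancel _ hj', mul_one, mul_one]
    rw [h2, ← mul_assoc, mul_comm (Ring.inverse (Nat.factorial n : R)),
      mul_assoc, Ring.inverse_mul_cancel _ hn', mul_one]
  -- truncExp of sum
  have hB : truncExp p (x + y) = ∑ q ∈ S.filter (fun q => q.1 + q.2 < p), f q := by
    rw [truncExp]
    have : ∀ n ∈ Finset.range p,
        Ring.inverse ((Nat.factorial n : R)) * (x + y) ^ n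
          = ∑ i ∈ Finset.range (n + 1), f (i, n - i) := by
      intro n hn
      rw [Finset.mem_range] at hn
      rw [add_pow, Finset.mul_sum]
      apply Finset.sum_congr rfl
      intro i hi
      rw [Finset.mem_range, Nat.lt_succ_iff] at hi
      have := hkey n hn i hi
      simp only [hf]
      calc Ring.inverse ((Nat.factorial n : R)) * (x ^ i * y ^ (n - i) * (n.choose i : R))
          = (Ring.inverse ((Nat.factorial n : R)) * (n.choose i : R)) * (x ^ i * y ^ (n - i)) := by
            ring
        _ = _ := by rw [this]
    rw [Finset.sum_congr rfl this, Finset.sum_sigma']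
    refine Finset.sum_nbij' (fun a => (a.2, a.1 - a.2)) (fun q => ⟨q.1 + q.2, q.1⟩) ?_ ?_ ?_ ?_ ?_
    · rintro ⟨n, i⟩ h
      simp only [Finset.mem_sigma, Finset.mem_range, Nat.lt_succ_iff] at h
      simp only [Finset.mem_filter, hS, Finset.mem_product, Finset.mem_range]
      obtain ⟨h1, h2⟩ := h
      omega
    · rintro ⟨a, b⟩ h
      simp only [Finset.mem_filter, hS, Finset.mem_product, Finset.mem_range] at h
      simp only [Finset.mem_sigma, Finset.mem_range, Nat.lt_succ_iff]
      omega
    · rintro ⟨n, i⟩ h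
      simp only [Finset.mem_sigma, Finset.mem_range, Nat.lt_succ_iff] at h
      simp only [Sigma.mk.inj_iff]
      constructor
      · omega
      · exact heq_of_eq rfl
    · rintro ⟨a, b⟩ h
      simp
    · rintro ⟨n, i⟩ h
      rfl
  rw [hA, hB, ← Finset.sum_filter_add_sum_filter_not S (fun q => q.1 + q.2 < p) f]
  have : ∀ q ∈ S.filter (fun q => ¬ q.1 + q.2 < p), f q ∈ I ^ (p * k) := by
    intro q hq
    simp only [Finset.mem_filter, hS, Finset.mem_product, Finset.mem_range, not_lt] at hq
    obtain ⟨⟨h1, h2⟩, h3⟩ := hq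
    have hxy : x ^ q.1 * y ^ q.2 ∈ I ^ (p * k) := by
      have hx1 : x ^ q.1 ∈ (I ^ k) ^ q.1 := Ideal.pow_mem_pow hx q.1
      have hy1 : y ^ q.2 ∈ (I ^ k) ^ q.2 := Ideal.pow_mem_pow hy q.2
      have : x ^ q.1 * y ^ q.2 ∈ (I ^ k) ^ q.1 * (I ^ k) ^ q.2 :=
        Ideal.mul_mem_mul hx1 hy1
      rw [← pow_add, ← pow_mul] at this
      refine Ideal.pow_le_pow_right ?_ this
      calc p * k ≤ (q.1 + q.2) * k := Nat.mul_le_mul_right k h3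
        _ = k * (q.1 + q.2) := Nat.mul_comm _ _
    exact Ideal.mul_mem_left _ _ hxy
  have hsum : ∑ q ∈ S.filter (fun q => ¬ q.1 + q.2 < p), f q ∈ I ^ (p * k) :=
    Ideal.sum_mem _ this
  have : (∑ q ∈ S.filter (fun q => q.1 + q.2 < p), f q) -
      ((∑ q ∈ S.filter (fun q => q.1 + q.2 < p), f q) +
        ∑ q ∈ S.filter (fun q => ¬ q.1 + q.2 < p), f q)
      = -(∑ q ∈ S.filter (fun q => ¬ q.1 + q.2 < p), f q) := by ring
  rw [this]
  exact neg_mem hsum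
end

section
/- Let p be a prime and R a commutative ring in which (p-1)! is invertible, let I ⊆ R be an ideal contained in the Jacobson radical of R, and let k ≥ 1 be an integer. Then: (i) every element of 1 + I^k is a unit of R; (ii) for each j ≥ 1 the set U_j = {u ∈ R^× : u - 1 ∈ I^j} is a subgroup of the group of units R^×; and (iii) the map x ↦ exp_p(x) induces a group isomorphism from the additive quotient group I^k/I^{pk} onto the multiplicative quotient group U_k/U_{pk}. -/
/-! Modulo `A ^ p` the truncated exponential is additive on an ideal `A`: the terms of
`exp_p x * exp_p y` missing from `exp_p (x + y)` have total degree at least `p`, and the binomial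
coefficients below degree `p` are matched by the invertible factorials. Writing
`exp_p x - 1 = x * (1 + x * r)`, the factor `1 + x * r` is a unit when `x` lies in the Jacobson
radical, so `exp_p x ≡ 1 mod A ^ p` exactly when `x ∈ A ^ p`. Surjectivity is successive
approximation: `u ≡ exp_p (u - 1)` modulo `(A ^ m) ^ 2` whenever `u ≡ 1 mod A ^ m`, so such a `u`
is `exp_p (u - 1)` times an element `≡ 1 mod A ^ (m + 1)`. -/

section TruncExp

open Finset Nat

variable {R : Type*} [CommRing R]

theorem inverse_factorial_mul_choose {m n : ℕ} (hn : IsUnit (n ! : R)) (hmn : m ≤ n) :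
    Ring.inverse (n ! : R) * n.choose m = Ring.inverse (m ! : R) * Ring.inverse ((n - m)! : R) := by
  have hm : IsUnit (m ! : R) :=
    isUnit_of_dvd_unit (Nat.cast_dvd_cast (factorial_dvd_factorial hmn)) hn
  have hnm : IsUnit ((n - m)! : R) :=
    isUnit_of_dvd_unit (Nat.cast_dvd_cast (factorial_dvd_factorial (n.sub_le m))) hn
  have key : (n.choose m * m ! * (n - m)! : R) = n ! := by
    rw [← Nat.cast_mul, ← Nat.cast_mul, choose_mul_factorial_mul_factorial hmn]
  calc Ring.inverse (n ! : R) * n.choose m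
      = Ring.inverse (n ! : R) * (n.choose m * m ! * (n - m)! * Ring.inverse ((n - m)! : R)
          * Ring.inverse (m ! : R)) := by
        rw [Ring.mul_inverse_cancel_right _ _ hnm, Ring.mul_inverse_cancel_right _ _ hm]
    _ = Ring.inverse (n ! : R) * n ! * (Ring.inverse (m ! : R) * Ring.inverse ((n - m)! : R)) := by
        rw [key]; ring
    _ = _ := by rw [Ring.inverse_mul_cancel _ hn, one_mul]

theorem truncExp_mul_truncExp_sub_truncExp_add_mem {p : ℕ} (hfac : IsUnit ((p - 1)! : R))
    {A : Ideal R} {x y : R} (hx : x ∈ A) (hy : y ∈ A) :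
    truncExp p x * truncExp p y - truncExp p (x + y) ∈ A ^ p := by
  set f : ℕ → ℕ → R := fun i j => Ring.inverse (i ! : R) * x ^ i * (Ring.inverse (j ! : R) * y ^ j)
  have hadd : truncExp p (x + y) = ∑ i ∈ range p, ∑ j ∈ range (p - i), f i j := by
    rw [← sum_range_diag_flip, truncExp]
    refine sum_congr rfl fun n hn => ?_
    have hn : IsUnit (n ! : R) := isUnit_of_dvd_unit
      (Nat.cast_dvd_cast (factorial_dvd_factorial (by have := mem_range.mp hn; omega))) hfac
    rw [add_pow, mul_sum]
    refine sum_congr rfl fun m hm => ?_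
    calc Ring.inverse (n ! : R) * (x ^ m * y ^ (n - m) * n.choose m)
        = Ring.inverse (n ! : R) * n.choose m * (x ^ m * y ^ (n - m)) := by ring
      _ = f m (n - m) := by
        rw [inverse_factorial_mul_choose hn (Nat.lt_succ_iff.mp (mem_range.mp hm))]; ring
  have hmul : truncExp p x * truncExp p y =
      ∑ i ∈ range p, (∑ j ∈ range (p - i), f i j + ∑ j ∈ Ico (p - i) p, f i j) := by
    rw [truncExp, truncExp, sum_mul_sum]
    exact sum_congr rfl fun i _ => (sum_range_add_sum_Ico (f i) (Nat.sub_le p i)).symm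
  rw [hmul, hadd, sum_add_distrib, add_sub_cancel_left]
  refine Ideal.sum_mem _ fun i _ => Ideal.sum_mem _ fun j hj => ?_
  have hij : p ≤ i + j := by have := (mem_Ico.mp hj).1; omega
  have : x ^ i * y ^ j ∈ A ^ p := Ideal.pow_le_pow_right hij
    (pow_add A i j ▸ Ideal.mul_mem_mul (Ideal.pow_mem_pow hx i) (Ideal.pow_mem_pow hy j))
  simp only [f]
  rw [mul_mul_mul_comm]
  exact Ideal.mul_mem_left _ _ this

theorem exists_truncExp_eq_one_add_mul {p : ℕ} (hp : 2 ≤ p) (x : R) :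
    ∃ r, truncExp p x = 1 + x * (1 + x * r) := by
  obtain ⟨q, rfl⟩ : ∃ q, p = q + 2 := ⟨p - 2, by omega⟩
  refine ⟨∑ j ∈ range q, Ring.inverse ((j + 2)! : R) * x ^ j, ?_⟩
  have tail : ∑ j ∈ range q, Ring.inverse ((j + 2)! : R) * x ^ (j + 2)
      = x * (x * ∑ j ∈ range q, Ring.inverse ((j + 2)! : R) * x ^ j) := by
    rw [mul_sum, mul_sum]
    exact sum_congr rfl fun j _ => by ring
  rw [truncExp, sum_range_succ', sum_range_succ', tail]
  simp only [zero_add, factorial_zero, factorial_one, Nat.cast_one, Ring.inverse_one]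
  ring

theorem truncExp_sub_one_mem_iff {p : ℕ} (hp : 2 ≤ p) {x : R} (hx : x ∈ Ideal.jacobson ⊥)
    {B : Ideal R} : truncExp p x - 1 ∈ B ↔ x ∈ B := by
  obtain ⟨r, hr⟩ := exists_truncExp_eq_one_add_mul hp x
  have hu : IsUnit (1 + x * r) := add_comm (x * r) 1 ▸ Ideal.mem_jacobson_bot.mp hx r
  rw [hr, add_sub_cancel_left]
  exact Ideal.mul_unit_mem_iff_mem B hu

theorem isUnit_truncExp {p : ℕ} (hp : 2 ≤ p) {x : R} (hx : x ∈ Ideal.jacobson ⊥) :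
    IsUnit (truncExp p x) := by
  have h := Ideal.mem_jacobson_bot.mp ((truncExp_sub_one_mem_iff hp hx).mpr hx) 1
  rwa [mul_one, sub_add_cancel] at h

theorem sub_truncExp_sub_one_mem {p : ℕ} (hp : 2 ≤ p) {B : Ideal R} {u : R} (hu : u - 1 ∈ B) :
    u - truncExp p (u - 1) ∈ B ^ 2 := by
  obtain ⟨r, hr⟩ := exists_truncExp_eq_one_add_mul hp (u - 1)
  rw [hr, show u - (1 + (u - 1) * (1 + (u - 1) * r)) = -((u - 1) * (u - 1) * r) by ring, sq]
  exact (B * B).neg_mem (Ideal.mul_mem_right _ _ (Ideal.mul_mem_mul hu hu))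

theorem exists_truncExp_sub_mem {p : ℕ} (hp : 2 ≤ p) (hfac : IsUnit ((p - 1)! : R))
    {A : Ideal R} (hA : A ≤ Ideal.jacobson ⊥) {u : R} (hu : u - 1 ∈ A) :
    ∃ x ∈ A, u - truncExp p x ∈ A ^ p := by
  suffices h : ∀ n m, p ≤ m + n → 1 ≤ m → ∀ u : R, u - 1 ∈ A ^ m →
      ∃ x ∈ A, u - truncExp p x ∈ A ^ p from h p 1 (by omega) le_rfl u (by rwa [pow_one])
  have hsq : ∀ {m l}, l ≤ 2 * m → (A ^ m) ^ 2 ≤ A ^ l := fun h =>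
    (pow_mul A _ 2).symm.trans_le (Ideal.pow_le_pow_right (by omega))
  intro n
  induction n with
  | zero =>
    intro m hm hm1 u hu
    exact ⟨u - 1, Ideal.pow_le_self (by omega) hu, hsq (by omega) (sub_truncExp_sub_one_mem hp hu)⟩
  | succ n ih =>
    intro m hm hm1 u hu
    have hy : u - 1 ∈ A := Ideal.pow_le_self (by omega) hu
    obtain ⟨e, he⟩ := isUnit_truncExp hp (hA hy)
    have hv : (↑e⁻¹ * u : R) - 1 ∈ A ^ (m + 1) := by
      rw [show (↑e⁻¹ * u : R) - 1 = ↑e⁻¹ * (u - e) by rw [mul_sub, e.inv_mul]]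
      exact Ideal.mul_mem_left _ _ (he ▸ hsq (by omega) (sub_truncExp_sub_one_mem hp hu))
    obtain ⟨x, hx, hvx⟩ := ih (m + 1) (by omega) (by omega) _ hv
    refine ⟨u - 1 + x, A.add_mem hy hx, ?_⟩
    rw [show u - truncExp p (u - 1 + x) = e * (↑e⁻¹ * u - truncExp p x)
        + (truncExp p (u - 1) * truncExp p x - truncExp p (u - 1 + x)) by
      rw [← he, mul_sub, ← mul_assoc, e.mul_inv, one_mul]; ring]
    exact (A ^ p).add_mem (Ideal.mul_mem_left _ _ hvx)
      (truncExp_mul_truncExp_sub_truncExp_add_mem hfac hy hx)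

namespace Ideal

def principalUnits (J : Ideal R) : Subgroup Rˣ :=
  (Units.map (Ideal.Quotient.mk J).toMonoidHom).ker

variable {J : Ideal R}

theorem mem_principalUnits {u : Rˣ} : u ∈ J.principalUnits ↔ (u : R) - 1 ∈ J := by
  rw [principalUnits, MonoidHom.mem_ker, Units.ext_iff, ← Ideal.Quotient.eq]
  rfl

theorem principalUnits_mk_eq_mk_iff {H : Subgroup Rˣ} {a b : H} :
    (QuotientGroup.mk a : H ⧸ J.principalUnits.subgroupOf H) = QuotientGroup.mk b ↔
      ((b : Rˣ) : R) - ((a : Rˣ) : R) ∈ J := by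
  rw [QuotientGroup.eq, Subgroup.mem_subgroupOf, principalUnits, MonoidHom.mem_ker,
    Subgroup.coe_mul, Subgroup.coe_inv, map_mul, map_inv, inv_mul_eq_one, Units.ext_iff,
    eq_comm, ← Ideal.Quotient.eq]
  rfl

end Ideal

theorem exists_truncExp_mulEquiv {p : ℕ} (hp : 2 ≤ p) (hfac : IsUnit ((p - 1)! : R))
    {A : Ideal R} (hA : A ≤ Ideal.jacobson ⊥) :
    ∃ e : Multiplicative (A ⧸ Submodule.comap A.subtype (A ^ p)) ≃*
        (A.principalUnits ⧸ (A ^ p).principalUnits.subgroupOf A.principalUnits),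
      ∀ (x : A) (u : A.principalUnits), ((u : Rˣ) : R) = truncExp p (x : R) →
        e (Multiplicative.ofAdd (Submodule.Quotient.mk x)) = QuotientGroup.mk u := by
  let N := (A ^ p).principalUnits.subgroupOf A.principalUnits
  let E : A → A.principalUnits := fun x => ⟨(isUnit_truncExp hp (hA x.2)).unit,
    Ideal.mem_principalUnits.mpr ((truncExp_sub_one_mem_iff hp (hA x.2)).mpr x.2)⟩
  have hE : ∀ x, ((E x : Rˣ) : R) = truncExp p (x : R) := fun x => IsUnit.unit_spec _
  let F : A →+ Additive (A.principalUnits ⧸ N) :=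
    AddMonoidHom.mk' (fun x => Additive.ofMul (QuotientGroup.mk (E x) : A.principalUnits ⧸ N))
      fun x y => by
        rw [← ofMul_mul, ← QuotientGroup.mk_mul, Additive.ofMul.apply_eq_iff_eq,
          Ideal.principalUnits_mk_eq_mk_iff, Subgroup.coe_mul, Units.val_mul, hE, hE, hE]
        exact truncExp_mul_truncExp_sub_truncExp_add_mem hfac x.2 y.2
  have hker : F.ker = (Submodule.comap A.subtype (A ^ p)).toAddSubgroup := by
    ext x
    rw [AddMonoidHom.mem_ker]
    show QuotientGroup.mk (E x) = (1 : A.principalUnits ⧸ N) ↔ (x : R) ∈ A ^ p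
    rw [QuotientGroup.eq_one_iff, Subgroup.mem_subgroupOf, Ideal.mem_principalUnits, hE,
      truncExp_sub_one_mem_iff hp (hA x.2)]
  have hsurj : Function.Surjective F := by
    intro q
    obtain ⟨u, rfl⟩ := QuotientGroup.mk_surjective q.toMul
    obtain ⟨x, hx, hux⟩ := exists_truncExp_sub_mem hp hfac hA (Ideal.mem_principalUnits.mp u.2)
    refine ⟨⟨x, hx⟩, congrArg Additive.ofMul (Ideal.principalUnits_mk_eq_mk_iff.mpr ?_)⟩
    rwa [hE]
  let e₀ : A ⧸ Submodule.comap A.subtype (A ^ p) ≃+ Additive (A.principalUnits ⧸ N) :=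
    QuotientAddGroup.liftEquiv _ hsurj hker.symm
  refine ⟨AddEquiv.toMultiplicativeLeft e₀, fun x u hu => ?_⟩
  change Additive.toMul (F x) = _
  rw [AddMonoidHom.mk'_apply, toMul_ofMul, Ideal.principalUnits_mk_eq_mk_iff, hE, hu, sub_self]
  exact Submodule.zero_mem _

end TruncExp

/-- if `I` is contained in the Jacobson radical and `(p-1)!` is invertible,
then (i) every element of `1 + I^k` is a unit; (ii) for every `j ≥ 1` the units congruent
to `1` mod `I^j` form a subgroup `U_j` of `Rˣ`; and (iii) `exp_p` induces a group
isomorphism `I^k/I^{pk} ≃ U_k/U_{pk}`. -/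
theorem truncExp_induces_quotient_group_iso (p : ℕ) (hp : p.Prime) (R : Type*) [CommRing R]
    (hfac : IsUnit ((Nat.factorial (p - 1) : R))) (I : Ideal R)
    (hI : I ≤ Ideal.jacobson ⊥) (k : ℕ) (hk : 1 ≤ k) :
    (∀ x ∈ I ^ k, IsUnit (1 + x)) ∧
    (∀ j : ℕ, 1 ≤ j → ∃ U : Subgroup Rˣ, ∀ u : Rˣ, u ∈ U ↔ (u : R) - 1 ∈ I ^ j) ∧
    (∀ (Uk Upk : Subgroup Rˣ),
      (∀ u : Rˣ, u ∈ Uk ↔ (u : R) - 1 ∈ I ^ k) →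
      (∀ u : Rˣ, u ∈ Upk ↔ (u : R) - 1 ∈ I ^ (p * k)) →
      ∃ e : Multiplicative
            (↥(I ^ k) ⧸ Submodule.comap (I ^ k).subtype (I ^ (p * k))) ≃*
          (↥Uk ⧸ Upk.subgroupOf Uk),
        ∀ (x : ↥(I ^ k)) (u : ↥Uk), ((u : Rˣ) : R) = truncExp p (x : R) →
          e (Multiplicative.ofAdd (Submodule.Quotient.mk x)) = QuotientGroup.mk u) := by
  have hIk : I ^ k ≤ Ideal.jacobson ⊥ := (Ideal.pow_le_self (by omega)).trans hI
  refine ⟨fun x hx => ?_, fun j _ => ⟨(I ^ j).principalUnits, fun u => Ideal.mem_principalUnits⟩,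
    fun Uk Upk hUk hUpk => ?_⟩
  · simpa only [mul_one, add_comm] using Ideal.mem_jacobson_bot.mp (hIk hx) 1
  obtain rfl : Uk = (I ^ k).principalUnits :=
    Subgroup.ext fun u => (hUk u).trans Ideal.mem_principalUnits.symm
  obtain rfl : Upk = (I ^ (p * k)).principalUnits :=
    Subgroup.ext fun u => (hUpk u).trans Ideal.mem_principalUnits.symm
  rw [pow_mul']
  exact exists_truncExp_mulEquiv hp.two_le hfac hIk
end

section
/- Let p be a prime, k a perfect field of characteristic p, and σ : k → k a field automorphism with σ ≠ id. Then for every field L and every ring homomorphism φ : W(k) → L from the ring of p-typical Witt vectors of k, one has φ ∘ W(σ) ≠ φ, where W(σ) : W(k) → W(k) is the ring automorphism induced functorially by σ. Consequently, any finite subgroup G of the automorphism group of k acts freely on the set of ring homomorphisms from W(k) to any field. -/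
theorem wittVector_key (p : ℕ) [Fact p.Prime] (k : Type*) [Field k] [CharP k p]
    (σ : k ≃+* k) (hσ : σ ≠ RingEquiv.refl k)
    (L : Type*) [Field L] (φ : WittVector p k →+* L) :
    φ.comp (WittVector.map (σ : k →+* k)) ≠ φ := by
  intro h
  obtain ⟨a, ha⟩ : ∃ a, σ a ≠ a := by
    by_contra hc
    push_neg at hc
    exact hσ (RingEquiv.ext hc)
  have hu : IsUnit (WittVector.teichmuller p (σ a) - WittVector.teichmuller p a) := by
    apply WittVector.isUnit_of_coeff_zero_ne_zero
    rw [show (WittVector.teichmuller p (σ a) - WittVector.teichmuller p a).coeff 0 =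
        WittVector.constantCoeff (WittVector.teichmuller p (σ a) - WittVector.teichmuller p a)
        from rfl, map_sub]
    simp only [WittVector.constantCoeff_apply, WittVector.teichmuller_coeff_zero]
    exact sub_ne_zero_of_ne ha
  have h0 : φ (WittVector.teichmuller p (σ a) - WittVector.teichmuller p a) = 0 := by
    rw [map_sub, sub_eq_zero]
    have := congrArg (fun f : WittVector p k →+* L => f (WittVector.teichmuller p a)) h
    simpa [WittVector.map_teichmuller] using this
  exact (hu.map φ).ne_zero h0

/-- if `k` is a perfect field of characteristic `p` and `σ ≠ id` is a field
automorphism of `k`, then for every field `L` and ring homomorphism `φ : W(k) → L` one has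
`φ ∘ W(σ) ≠ φ`.  Consequently any finite subgroup of `Aut(k)` acts freely on the set of
ring homomorphisms from `W(k)` to any field. -/
theorem wittVector_comp_map_ne (p : ℕ) [Fact p.Prime] (k : Type*) [Field k] [CharP k p]
    [PerfectField k] (σ : k ≃+* k) (hσ : σ ≠ RingEquiv.refl k) :
    (∀ (L : Type*) [Field L] (φ : WittVector p k →+* L),
        φ.comp (WittVector.map (σ : k →+* k)) ≠ φ) ∧
    (∀ (G : Subgroup (k ≃+* k)), Finite G →
      ∀ g ∈ G, g ≠ RingEquiv.refl k →
        ∀ (L : Type*) [Field L] (φ : WittVector p k →+* L),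
          φ.comp (WittVector.map (g : k →+* k)) ≠ φ) := by
  exact ⟨fun L _ φ => wittVector_key p k σ hσ L φ,
    fun G _ g _ hg L _ φ => wittVector_key p k g hg L φ⟩
end

section
/- Let p be a prime, and let A and B be commutative rings each of which is p-adically complete (complete and separated with respect to the topology defined by powers of the ideal (p)). Let f : A → B be a ring homomorphism for which there exists N > 0 such that (ker f)^N = 0 and such that for every b ∈ B the element b^{p^N} lies in the image of f. Let k be a perfect field of characteristic p. Then every ring homomorphism φ : W(k) → B lifts uniquely along f: there exists a unique ring homomorphism ψ : W(k) → A with f ∘ ψ = φ. -/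
/-!
Modulo `p`, a uniform `F_p`-isomorphism `f` is invertible up to Frobenius: if `f u = b ^ p ^ N`,
then `u ^ p ^ (2 * N)` is well defined modulo `p` (an element whose image lies in `p B` has its
`p ^ N`-th power in `p A + ker f`, and `ker f` is nil of exponent `N ≤ p ^ N`), and
`b ↦ u ^ p ^ (2 * N)` is a ring map `B → A / p`. Composing it with `φ` on Teichmüller
representatives and undoing the Frobenius twists by `p`-power roots in `k` gives ring maps
`k → A / p`; the `n`-th ghost component turns these into compatible ring maps
`W(k) → A / p ^ (n + 1)`, which glue to `ψ` by completeness of `A`.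
Ring maps out of `W(k)` into a ring where `p` is nilpotent are determined by their values on
Teichmüller representatives, and `[α] = [α ^ (1 / p ^ m)] ^ p ^ m`; so any lift of `φ` must
agree with these approximations, which gives uniqueness, and `f ∘ ψ = φ` holds modulo every
power of `p`.
-/

open WittVector

theorem add_pow_prime_pow_sub_mem_span {R : Type*} [CommRing R] {p : ℕ} (hp : p.Prime)
    (x y : R) (m : ℕ) : (x + y) ^ p ^ m - (x ^ p ^ m + y ^ p ^ m) ∈ Ideal.span {(p : R)} := by
  obtain ⟨r, hr⟩ := (Commute.all x y).exists_add_pow_prime_pow_eq hp m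
  exact Ideal.mem_span_singleton'.mpr ⟨x * y * r, by rw [hr]; ring⟩

theorem isNilpotent_natCast_quotient_span_pow {R : Type*} [CommRing R] (m n : ℕ) :
    IsNilpotent (m : R ⧸ Ideal.span {(m : R)} ^ n) :=
  ⟨n, by
    rw [← map_natCast (Ideal.Quotient.mk _), ← map_pow, Ideal.Quotient.eq_zero_iff_mem]
    exact Ideal.pow_mem_pow (Ideal.mem_span_singleton_self _) n⟩

theorem map_mem_span_natCast_pow {A B : Type*} [CommRing A] [CommRing B] (f : A →+* B)
    {m n : ℕ} {x : A} (hx : x ∈ Ideal.span {(m : A)} ^ n) :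
    f x ∈ Ideal.span {(m : B)} ^ n := by
  rw [Ideal.span_singleton_pow, Ideal.mem_span_singleton] at hx ⊢
  simpa using map_dvd f hx

theorem iterateFrobeniusEquiv_symm_add_apply_pow (R : Type*) [CommSemiring R] (p : ℕ)
    [ExpChar R p] [PerfectRing R p] (m n : ℕ) (x : R) :
    (iterateFrobeniusEquiv R p (m + n)).symm x ^ p ^ m = (iterateFrobeniusEquiv R p n).symm x := by
  rw [iterateFrobeniusEquiv_symm_add_apply, ← iterateFrobeniusEquiv_def,
    RingEquiv.apply_symm_apply]

theorem iterateFrobeniusEquiv_symm_apply_pow (R : Type*) [CommSemiring R] (p : ℕ) [ExpChar R p]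
    [PerfectRing R p] (n : ℕ) (x : R) : (iterateFrobeniusEquiv R p n).symm x ^ p ^ n = x := by
  rw [← iterateFrobeniusEquiv_def, RingEquiv.apply_symm_apply]

namespace WittVector

variable {p : ℕ} [hp : Fact p.Prime] {R : Type*} [CommRing R] {I : Ideal R}

theorem ghostComponent_mem_pow_of_coeff_mem (hI : (p : R) ∈ I) {w : WittVector p R}
    (hw : ∀ i, w.coeff i ∈ I) (n : ℕ) : ghostComponent n w ∈ I ^ (n + 1) := by
  rw [ghostComponent_apply, aeval_wittPolynomial]
  refine Ideal.sum_mem _ fun i hi => ?_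
  have hin : i ≤ n := Nat.lt_succ_iff.mp (Finset.mem_range.mp hi)
  have hexp : n + 1 - i ≤ p ^ (n - i) := by
    have := Nat.lt_pow_self (n := n - i) hp.out.one_lt
    omega
  rw [show n + 1 = i + (n + 1 - i) by omega, pow_add]
  exact Ideal.mul_mem_mul (Ideal.pow_mem_pow hI i)
    (Ideal.pow_le_pow_right hexp (Ideal.pow_mem_pow (hw i) _))

/-- The `n`-th ghost component modulo `I ^ (n + 1)` only depends on the coefficients modulo `I`. -/
noncomputable def ghostModPow (hI : (p : R) ∈ I) (n : ℕ) :
    WittVector p (R ⧸ I) →+* R ⧸ I ^ (n + 1) :=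
  (map (Ideal.Quotient.mk I)).liftOfRightInverse _
    (Function.rightInverse_surjInv (map_surjective _ Ideal.Quotient.mk_surjective))
    ⟨(Ideal.Quotient.mk _).comp (ghostComponent n), fun w hw => by
      refine Ideal.Quotient.eq_zero_iff_mem.mpr
        (ghostComponent_mem_pow_of_coeff_mem hI (fun i => ?_) n)
      rw [← Ideal.Quotient.eq_zero_iff_mem, ← map_coeff, RingHom.mem_ker.mp hw, zero_coeff]⟩

theorem ghostModPow_map_mk (hI : (p : R) ∈ I) (n : ℕ) (w : WittVector p R) :
    ghostModPow hI n (map (Ideal.Quotient.mk I) w) = Ideal.Quotient.mk _ (ghostComponent n w) :=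
  RingHom.liftOfRightInverse_comp_apply _ _ _ _ w

theorem factorPow_ghostModPow_succ (hI : (p : R) ∈ I) {y y' : WittVector p (R ⧸ I)}
    (h : ∀ i, y'.coeff i = y.coeff i ^ p) (n : ℕ) :
    Ideal.Quotient.factorPow I (Nat.le_succ (n + 1)) (ghostModPow hI (n + 1) y) =
      ghostModPow hI n y' := by
  obtain ⟨w, rfl⟩ := map_surjective _ Ideal.Quotient.mk_surjective y
  have hw' : y' = map (Ideal.Quotient.mk I) (mk p fun i => w.coeff i ^ p) := by
    ext i
    rw [h, map_coeff, map_coeff, coeff_mk, map_pow]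
  rw [hw', ghostModPow_map_mk, ghostModPow_map_mk, Ideal.Quotient.factor_mk, Ideal.Quotient.eq,
    ghostComponent_apply, ghostComponent_apply, aeval_wittPolynomial, aeval_wittPolynomial,
    Finset.sum_range_succ _ (n + 1)]
  have hterms : ∀ i ∈ Finset.range (n + 1), (p : R) ^ i * w.coeff i ^ p ^ (n + 1 - i) =
      (p : R) ^ i * (mk p fun i => w.coeff i ^ p).coeff i ^ p ^ (n - i) := by
    intro i hi
    have hin : n + 1 - i = n - i + 1 := by have := Finset.mem_range.mp hi; omega
    rw [coeff_mk, ← pow_mul, hin, pow_succ']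
  rw [Finset.sum_congr rfl hterms, add_sub_cancel_left]
  exact Ideal.mul_mem_right _ _ (Ideal.pow_mem_pow hI _)

end WittVector

structure RingHom.IsUniformFpIso {A B : Type*} [CommRing A] [CommRing B] (f : A →+* B)
    (p N : ℕ) : Prop where
  ker_pow_eq_bot : RingHom.ker f ^ N = ⊥
  exists_map_eq_pow : ∀ b : B, ∃ a : A, f a = b ^ p ^ N

namespace RingHom.IsUniformFpIso

variable {p : ℕ} {A B : Type*} [CommRing A] [CommRing B] {f : A →+* B} {N : ℕ}

noncomputable def powPreimage (hf : f.IsUniformFpIso p N) (b : B) : A :=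
  (hf.exists_map_eq_pow b).choose

theorem map_powPreimage (hf : f.IsUniformFpIso p N) (b : B) :
    f (hf.powPreimage b) = b ^ p ^ N :=
  (hf.exists_map_eq_pow b).choose_spec

variable [hp : Fact p.Prime]

theorem pow_mem_span_of_map_mem (hf : f.IsUniformFpIso p N) {x : A}
    (hx : f x ∈ Ideal.span {(p : B)}) : x ^ p ^ (2 * N) ∈ Ideal.span {(p : A)} := by
  obtain ⟨b, hb⟩ := Ideal.mem_span_singleton'.mp hx
  obtain ⟨c, hc⟩ := hf.exists_map_eq_pow b
  set ε := x ^ p ^ N - (p : A) ^ p ^ N * c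
  have hε : ε ^ N = 0 := by
    refine Ideal.pow_eq_zero_of_mem (n := N) (by rw [hf.ker_pow_eq_bot]; rfl) le_rfl ?_
    rw [RingHom.mem_ker, map_sub, map_pow, ← hb, map_mul, map_pow, map_natCast, hc, mul_pow,
      mul_comm, sub_self]
  have hxε : Ideal.Quotient.mk (Ideal.span {(p : A)}) (x ^ p ^ N) = Ideal.Quotient.mk _ ε := by
    refine Ideal.Quotient.eq.mpr ?_
    rw [sub_sub_cancel]
    exact Ideal.mul_mem_right _ _
      (Ideal.pow_mem_of_mem _ (Ideal.mem_span_singleton_self _) _ (pow_pos hp.out.pos N))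
  have hle : p ^ N * N ≤ p ^ (2 * N) := by
    rw [two_mul, pow_add]
    exact Nat.mul_le_mul_left _ (Nat.lt_pow_self hp.out.one_lt).le
  refine Ideal.pow_mem_of_pow_mem _ ?_ hle
  rw [← Ideal.Quotient.eq_zero_iff_mem, pow_mul, map_pow, hxε, ← map_pow, hε, map_zero]

theorem mk_pow_eq_of_map_sub_mem (hf : f.IsUniformFpIso p N) {x y : A}
    (h : f x - f y ∈ Ideal.span {(p : B)}) :
    Ideal.Quotient.mk (Ideal.span {(p : A)}) (x ^ p ^ (2 * N)) =
      Ideal.Quotient.mk _ (y ^ p ^ (2 * N)) := by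
  rw [← map_sub] at h
  refine Ideal.Quotient.eq.mpr ?_
  have hsum := add_pow_prime_pow_sub_mem_span hp.out y (x - y) (2 * N)
  rw [add_sub_cancel] at hsum
  convert Ideal.add_mem _ hsum (hf.pow_mem_span_of_map_mem h) using 1
  ring

/-- `b ↦ b ^ p ^ (3 * N)`, lifted along `f` modulo `p`. -/
noncomputable def powLift (hf : f.IsUniformFpIso p N) : B →+* A ⧸ Ideal.span {(p : A)} where
  toFun b := Ideal.Quotient.mk _ (hf.powPreimage b ^ p ^ (2 * N))
  map_one' := by
    rw [hf.mk_pow_eq_of_map_sub_mem (y := 1) (by simp [map_powPreimage]), one_pow, map_one]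
  map_mul' b c := by
    rw [hf.mk_pow_eq_of_map_sub_mem (y := hf.powPreimage b * hf.powPreimage c)
      (by simp [map_powPreimage, mul_pow]), mul_pow, map_mul]
  map_zero' := by
    rw [hf.mk_pow_eq_of_map_sub_mem (y := 0)
      (by simp [map_powPreimage, zero_pow (pow_ne_zero N hp.out.ne_zero)]),
      zero_pow (pow_ne_zero _ hp.out.ne_zero), map_zero]
  map_add' b c := by
    rw [hf.mk_pow_eq_of_map_sub_mem (y := hf.powPreimage b + hf.powPreimage c)
      (by simpa [map_powPreimage] using add_pow_prime_pow_sub_mem_span hp.out b c N),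
      ← map_add, Ideal.Quotient.eq]
    exact add_pow_prime_pow_sub_mem_span hp.out _ _ _

theorem powLift_apply_of_map_eq (hf : f.IsUniformFpIso p N) {b : B} {u : A}
    (hu : f u = b ^ p ^ N) : hf.powLift b = Ideal.Quotient.mk _ (u ^ p ^ (2 * N)) :=
  hf.mk_pow_eq_of_map_sub_mem (by simp [map_powPreimage, hu])

variable {k : Type*} [CommRing k] [CharP k p] [PerfectRing k p] (hf : f.IsUniformFpIso p N)
  (φ : WittVector p k →+* B)

noncomputable def residueLift : k →+* A ⧸ Ideal.span {(p : A)} :=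
  (Ideal.Quotient.lift _ (hf.powLift.comp φ) fun x hx => by
    obtain ⟨c, rfl⟩ := Ideal.mem_span_singleton'.mp hx
    rw [RingHom.comp_apply, map_mul, map_mul, map_natCast, map_natCast,
      ← map_natCast (Ideal.Quotient.mk _),
      Ideal.Quotient.eq_zero_iff_mem.mpr (Ideal.mem_span_singleton_self _), mul_zero]).comp
    (quotientPEquiv (p := p) (k := k)).symm.toRingHom

theorem residueLift_apply (a : k) : hf.residueLift φ a = hf.powLift (φ (teichmuller p a)) := by
  have h : (quotientPEquiv (p := p) (k := k)).symm a = Ideal.Quotient.mk _ (teichmuller p a) := by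
    rw [RingEquiv.symm_apply_eq]
    exact (teichmuller_coeff_zero p a).symm
  simp [residueLift, h]

/-- The lift `W(k) → A` modulo `p ^ (n + 1)`. The root of order `p ^ (3 * N + n)` undoes the
powers taken by `powLift` and by the `n`-th ghost component. -/
noncomputable def liftModPow (n : ℕ) :
    WittVector p k →+* A ⧸ Ideal.span {(p : A)} ^ (n + 1) :=
  (ghostModPow (Ideal.mem_span_singleton_self _) n).comp
    (map ((hf.residueLift φ).comp (iterateFrobeniusEquiv k p (3 * N + n)).symm.toRingHom))

theorem liftModPow_teichmuller {n : ℕ} {α : k} {u : A}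
    (hu : f u = φ (teichmuller p ((iterateFrobeniusEquiv k p (2 * N + n)).symm α))) :
    hf.liftModPow φ n (teichmuller p α) = Ideal.Quotient.mk _ (u ^ p ^ (2 * N + n)) := by
  have hroot : (iterateFrobeniusEquiv k p (2 * N + n)).symm α =
      (iterateFrobeniusEquiv k p (3 * N + n)).symm α ^ p ^ N := by
    rw [show 3 * N + n = N + (2 * N + n) by ring, iterateFrobeniusEquiv_symm_add_apply_pow]
  have hu' :
      f u = φ (teichmuller p ((iterateFrobeniusEquiv k p (3 * N + n)).symm α)) ^ p ^ N := by
    rw [hu, hroot, map_pow, map_pow]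
  rw [liftModPow, RingHom.comp_apply, map_teichmuller, RingHom.comp_apply,
    RingEquiv.toRingHom_eq_coe, RingEquiv.coe_toRingHom, residueLift_apply,
    hf.powLift_apply_of_map_eq hu', ← map_teichmuller, ghostModPow_map_mk,
    ghostComponent_teichmuller, ← pow_mul, ← pow_add]

theorem factorPow_comp_liftModPow_succ {n : ℕ} :
    (Ideal.Quotient.factorPow _ (Nat.le_succ (n + 1))).comp (hf.liftModPow φ (n + 1)) =
      hf.liftModPow φ n := by
  ext x
  refine factorPow_ghostModPow_succ (Ideal.mem_span_singleton_self _) (fun i => ?_) n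
  have hroot := iterateFrobeniusEquiv_symm_add_apply_pow k p 1 (3 * N + n) (x.coeff i)
  rw [pow_one, add_comm 1, add_assoc] at hroot
  simp only [map_coeff, RingHom.comp_apply, RingEquiv.toRingHom_eq_coe, RingEquiv.coe_toRingHom,
    ← map_pow, hroot]

noncomputable def wittLift [IsAdicComplete (Ideal.span {(p : A)}) A] : WittVector p k →+* A :=
  IsAdicComplete.StrictMono.liftRingHom _ add_left_strictMono (hf.liftModPow φ)
    (hf.factorPow_comp_liftModPow_succ φ)

theorem mk_wittLift [IsAdicComplete (Ideal.span {(p : A)}) A] (n : ℕ) (x : WittVector p k) :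
    Ideal.Quotient.mk _ (hf.wittLift φ x) = hf.liftModPow φ n x :=
  IsAdicComplete.StrictMono.mk_liftRingHom (Ideal.span {(p : A)}) add_left_strictMono
    (hf.liftModPow φ) (hf.factorPow_comp_liftModPow_succ φ) x

theorem mk_comp_eq_liftModPow {ψ : WittVector p k →+* A} (hψ : f.comp ψ = φ) (n : ℕ) :
    (Ideal.Quotient.mk _).comp ψ = hf.liftModPow φ n := by
  refine eq_of_apply_teichmuller_eq _ _ (isNilpotent_natCast_quotient_span_pow _ _) fun α => ?_
  rw [hf.liftModPow_teichmuller φ (u := ψ (teichmuller p _)) (by rw [← hψ]; rfl), ← map_pow,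
    ← map_pow, iterateFrobeniusEquiv_symm_apply_pow]
  rfl

theorem eq_wittLift [IsAdicComplete (Ideal.span {(p : A)}) A] {ψ : WittVector p k →+* A}
    (hψ : f.comp ψ = φ) : ψ = hf.wittLift φ :=
  IsAdicComplete.StrictMono.eq_liftRingHom (Ideal.span {(p : A)}) add_left_strictMono
    (hf.liftModPow φ) (hf.factorPow_comp_liftModPow_succ φ)
    (hf.mk_comp_eq_liftModPow φ hψ)

theorem exists_map_eq_teichmuller (hf : f.IsUniformFpIso p N) (a : k) :
    ∃ u : A, f u = φ (teichmuller p a) :=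
  ⟨hf.powPreimage (φ (teichmuller p ((iterateFrobeniusEquiv k p N).symm a))), by
    rw [map_powPreimage, ← map_pow, ← map_pow, iterateFrobeniusEquiv_symm_apply_pow]⟩

theorem comp_wittLift [IsAdicComplete (Ideal.span {(p : A)}) A]
    [IsHausdorff (Ideal.span {(p : B)}) B] : f.comp (hf.wittLift φ) = φ := by
  suffices h : ∀ n, (Ideal.Quotient.mk (Ideal.span {(p : B)} ^ (n + 1))).comp
      (f.comp (hf.wittLift φ)) = (Ideal.Quotient.mk _).comp φ from
    DFunLike.coe_injective (IsHausdorff.StrictMono.funext' _ add_left_strictMono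
      fun n x => RingHom.congr_fun (h n) x)
  intro n
  refine eq_of_apply_teichmuller_eq _ _ (isNilpotent_natCast_quotient_span_pow _ _) fun α => ?_
  obtain ⟨u, hu⟩ :=
    hf.exists_map_eq_teichmuller φ ((iterateFrobeniusEquiv k p (2 * N + n)).symm α)
  have hlift : hf.wittLift φ (teichmuller p α) - u ^ p ^ (2 * N + n) ∈
      Ideal.span {(p : A)} ^ (n + 1) :=
    Ideal.Quotient.eq.mp (by rw [mk_wittLift, hf.liftModPow_teichmuller φ hu])
  have hu' : f (u ^ p ^ (2 * N + n)) = φ (teichmuller p α) := by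
    rw [map_pow, hu, ← map_pow, ← map_pow, iterateFrobeniusEquiv_symm_apply_pow]
  simp only [RingHom.comp_apply]
  rw [Ideal.Quotient.eq, ← hu', ← map_sub]
  exact map_mem_span_natCast_pow f hlift

end RingHom.IsUniformFpIso

theorem wittVector_lift_unique_of_uniform_Fp_iso_general (p : ℕ) [Fact p.Prime]
    (A B : Type*) [CommRing A] [CommRing B]
    [IsAdicComplete (Ideal.span {(p : A)}) A] [IsAdicComplete (Ideal.span {(p : B)}) B]
    (f : A →+* B) (N : ℕ)
    (hker : RingHom.ker f ^ N = ⊥)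
    (hpow : ∀ b : B, ∃ a : A, f a = b ^ p ^ N)
    (k : Type*) [Field k] [CharP k p] [PerfectField k]
    (φ : WittVector p k →+* B) :
    ∃! ψ : WittVector p k →+* A, f.comp ψ = φ := by
  have hf : f.IsUniformFpIso p N := ⟨hker, hpow⟩
  exact ⟨hf.wittLift φ, hf.comp_wittLift φ, fun ψ hψ => hf.eq_wittLift φ hψ⟩

/-- if `A, B` are `p`-adically complete commutative rings and `f : A → B` is a
uniform `F_p`-isomorphism (i.e. `(ker f)^N = 0` and every `b^{p^N}` is in the image, for some
`N > 0`), then every ring homomorphism `φ : W(k) → B`, for `k` a perfect field of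
characteristic `p`, lifts uniquely along `f`. -/
theorem wittVector_lift_unique_of_uniform_Fp_iso (p : ℕ) [Fact p.Prime]
    (A B : Type*) [CommRing A] [CommRing B]
    [IsAdicComplete (Ideal.span {(p : A)}) A] [IsAdicComplete (Ideal.span {(p : B)}) B]
    (f : A →+* B) (N : ℕ) (hN : 0 < N)
    (hker : RingHom.ker f ^ N = ⊥)
    (hpow : ∀ b : B, ∃ a : A, f a = b ^ p ^ N)
    (k : Type*) [Field k] [CharP k p] [PerfectField k]
    (φ : WittVector p k →+* B) :
    ∃! ψ : WittVector p k →+* A, f.comp ψ = φ :=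
  wittVector_lift_unique_of_uniform_Fp_iso_general p A B f N hker hpow k φ
end

section
/- Let p be a prime, let R = ℤ[X]/(Φ_p(X)) where Φ_p is the p-th cyclotomic polynomial, let ζ ∈ R be the image of X, and let 𝔪 = (1 - ζ) be the principal ideal generated by 1 - ζ. Then for every y ∈ 𝔪, the element (1 + y)^p - 1 lies in 𝔪^{p+1}. In other words, in the quotient ring R/𝔪^{p+1}, every element of 1 + 𝔪̄ has p-th power equal to 1, where 𝔪̄ is the image of 𝔪. -/
/-!
Write `μ = ζ - 1`. Expanding `Φ_p(1 + μ) = ∑_{k<p} C(p, k+1) μ^k = 0` and using `p ∣ C(p, k)`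
for `0 < k < p` gives `p + μ^(p-1) ∈ p μ R`. Hence `p ∈ 𝔪^j` implies `p ∈ 𝔪^(j+1)` for
`j < p - 1`, so `p ∈ 𝔪^(p-1)` and then `p ≡ -μ^(p-1) mod 𝔪^p`. For `y = μ t` the middle binomial
terms of `(1 + y)^p - 1` lie in `p 𝔪^2 ⊆ 𝔪^(p+1)`, and the two outer ones give
`p y + y^p ≡ μ^p (t^p - t) mod 𝔪^(p+1)`. Finally `t^p ≡ t mod 𝔪`, because `R/𝔪` is a quotient
of `ℤ` in which `p = 0`.
-/

/-- The ring `ℤ[X]/(Φ_p(X))`, i.e. the ring of integers `ℤ[ζ_p]` of the `p`-th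
cyclotomic field. -/
abbrev cycIntRing (p : ℕ) : Type :=
  Polynomial ℤ ⧸ Ideal.span {Polynomial.cyclotomic p ℤ}

/-- The primitive `p`-th root of unity `ζ`, the image of `X` in `ℤ[X]/(Φ_p(X))`. -/
noncomputable def zetaCyc (p : ℕ) : cycIntRing p :=
  Ideal.Quotient.mk (Ideal.span {Polynomial.cyclotomic p ℤ}) Polynomial.X

/-- The ideal `𝔪 = (1 - ζ)` of `ℤ[ζ_p]`. -/
noncomputable def mCyc (p : ℕ) : Ideal (cycIntRing p) :=
  Ideal.span {1 - zetaCyc p}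

open Polynomial Finset

theorem Ideal.mem_pow_of_sub_mem_span_singleton_mul {R : Type*} [CommRing R] {I : Ideal R}
    {a b : R} {n : ℕ} (hb : b ∈ I ^ n) (h : a - b ∈ Ideal.span {a} * I) : a ∈ I ^ n := by
  suffices ∀ j ≤ n, a ∈ I ^ j from this n le_rfl
  intro j hj
  induction j with
  | zero => simp
  | succ j ih =>
    have hspan : Ideal.span {a} * I ≤ I ^ (j + 1) := by
      rw [pow_succ]
      exact Ideal.mul_mono_left ((Ideal.span_singleton_le_iff_mem _).2 (ih (by omega)))
    simpa using Ideal.add_mem _ (hspan h) (Ideal.pow_le_pow_right hj hb)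

theorem Ideal.pow_prime_sub_self_mem {R : Type*} [CommRing R] {I : Ideal R} {p : ℕ}
    (hp : p.Prime) (hpI : (p : R) ∈ I) (hint : ∀ r : R, ∃ n : ℤ, r - n ∈ I) (t : R) :
    t ^ p - t ∈ I := by
  have := Fact.mk hp
  obtain ⟨n, hn⟩ := hint t
  obtain ⟨d, hd⟩ : (p : ℤ) ∣ n ^ p - n := by
    rw [← ZMod.intCast_zmod_eq_zero_iff_dvd]
    push_cast
    rw [ZMod.pow_card, sub_self]
  rw [← Ideal.Quotient.eq_zero_iff_mem] at hpI ⊢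
  rw [map_sub, map_pow, Ideal.Quotient.eq.2 hn, ← map_pow, ← map_sub, ← Int.cast_pow,
    ← Int.cast_sub, hd]
  simp [hpI]

section

variable {R : Type*} [CommRing R] {p : ℕ} {μ : R}

theorem sum_range_choose_succ_mul_pow_eq_zero (hp : p.Prime)
    (hμ : (cyclotomic p R).IsRoot (μ + 1)) :
    ∑ k ∈ range p, (p.choose (k + 1) : R) * μ ^ k = 0 := by
  have := Fact.mk hp
  have h := congrArg (eval μ) (geom_sum_X_comp_X_add_one_eq_sum (R := R) p)
  rw [← cyclotomic_prime, eval_comp, eval_add, eval_X, eval_one, hμ.eq_zero] at h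
  simpa [eval_finsetSum] using h.symm

theorem one_add_pow_prime_sub_mem (hp : p.Prime) (y : R) :
    (1 + y) ^ p - 1 - p * y - y ^ p ∈ Ideal.span {(p : R) * y ^ 2} := by
  obtain ⟨n, rfl⟩ : ∃ n, p = n + 2 := ⟨p - 2, by have := hp.two_le; omega⟩
  rw [add_comm 1 y, add_pow, sum_range_succ, sum_range_succ', sum_range_succ']
  simp only [one_pow, mul_one, Nat.choose_self, Nat.cast_one, pow_zero, Nat.choose_zero_right,
    pow_one, Nat.choose_one_right, zero_add]
  have hmiddle : ∑ k ∈ range n, y ^ (k + 1 + 1) * ((n + 2).choose (k + 1 + 1) : R) ∈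
      Ideal.span {((n + 2 : ℕ) : R) * y ^ 2} := by
    refine Ideal.sum_mem _ fun k hk => Ideal.mem_span_singleton.2 ?_
    obtain ⟨m, hm⟩ :=
      hp.dvd_choose_self (by omega : k + 1 + 1 ≠ 0) (by have := mem_range.1 hk; omega)
    exact ⟨y ^ k * m, by rw [hm]; push_cast; ring⟩
  convert hmiddle using 1
  push_cast
  ring


theorem natCast_add_pow_mem_span_mul (hp : p.Prime) (hμ : (cyclotomic p R).IsRoot (μ + 1)) :
    (p : R) + μ ^ (p - 1) ∈ Ideal.span {(p : R)} * Ideal.span {μ} := by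
  have hsum := sum_range_choose_succ_mul_pow_eq_zero hp hμ
  obtain ⟨n, rfl⟩ : ∃ n, p = n + 2 := ⟨p - 2, by have := hp.two_le; omega⟩
  rw [sum_range_succ, sum_range_succ'] at hsum
  simp only [Nat.choose_self, Nat.cast_one, one_mul, pow_zero, mul_one, zero_add,
    Nat.choose_one_right] at hsum
  rw [Ideal.span_singleton_mul_span_singleton, show n + 2 - 1 = n + 1 by omega,
    show ((n + 2 : ℕ) : R) + μ ^ (n + 1) =
      -∑ k ∈ range n, ((n + 2).choose (k + 1 + 1) : R) * μ ^ (k + 1) by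
        linear_combination hsum]
  refine neg_mem (Ideal.sum_mem _ fun k hk => Ideal.mem_span_singleton.2 ?_)
  obtain ⟨m, hm⟩ := hp.dvd_choose_self (by omega : k + 1 + 1 ≠ 0) (by have := mem_range.1 hk; omega)
  exact ⟨m * μ ^ k, by rw [hm]; push_cast; ring⟩

theorem natCast_mem_span_singleton_pow (hp : p.Prime) (hμ : (cyclotomic p R).IsRoot (μ + 1)) :
    (p : R) ∈ Ideal.span {μ} ^ (p - 1) :=
  Ideal.mem_pow_of_sub_mem_span_singleton_mul
    (neg_mem (Ideal.pow_mem_pow (Ideal.mem_span_singleton_self μ) _))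
    (by simpa using natCast_add_pow_mem_span_mul hp hμ)

theorem natCast_add_pow_mem_span_singleton_pow (hp : p.Prime)
    (hμ : (cyclotomic p R).IsRoot (μ + 1)) :
    (p : R) + μ ^ (p - 1) ∈ Ideal.span {μ} ^ p := by
  have hle : Ideal.span {(p : R)} ≤ Ideal.span {μ} ^ (p - 1) :=
    (Ideal.span_singleton_le_iff_mem _).2 (natCast_mem_span_singleton_pow hp hμ)
  rw [← Nat.sub_add_cancel hp.one_le, pow_succ, Nat.sub_add_cancel hp.one_le]
  exact Ideal.mul_mono_left hle (natCast_add_pow_mem_span_mul hp hμ)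

theorem one_add_pow_prime_sub_one_mem_span_singleton_pow (hp : p.Prime)
    (hμ : (cyclotomic p R).IsRoot (μ + 1)) (hint : ∀ r : R, ∃ n : ℤ, r - n ∈ Ideal.span {μ})
    {y : R} (hy : y ∈ Ideal.span {μ}) : (1 + y) ^ p - 1 ∈ Ideal.span {μ} ^ (p + 1) := by
  set I := Ideal.span {μ}
  have hpI : (p : R) ∈ I ^ (p - 1) := natCast_mem_span_singleton_pow hp hμ
  have hpow : I ^ (p + 1) = I ^ (p - 1) * I ^ 2 := by
    rw [← pow_add]; congr 1; have := hp.two_le; omega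
  obtain ⟨t, rfl⟩ := Ideal.mem_span_singleton'.1 hy
  obtain ⟨r, hr⟩ := Ideal.mem_span_singleton'.1 (one_add_pow_prime_sub_mem hp (t * μ))
  have hfermat : t ^ p - t ∈ I := Ideal.pow_prime_sub_self_mem hp
    (Ideal.pow_le_self (by have := hp.two_le; omega) hpI) hint t
  have hμp : μ ^ (p - 1) * μ = μ ^ p := by rw [← pow_succ, Nat.sub_add_cancel hp.one_le]
  rw [show (1 + t * μ) ^ p - 1 =
      r * (p * (t * μ) ^ 2) + ((p + μ ^ (p - 1)) * (t * μ) + μ ^ p * (t ^ p - t)) by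
    linear_combination -hr - t * hμp]
  refine add_mem (hpow ▸ ?_) (add_mem ?_ ?_)
  · exact Ideal.mul_mem_left _ _ (Ideal.mul_mem_mul hpI (Ideal.pow_mem_pow hy 2))
  · exact Ideal.mul_mem_mul (natCast_add_pow_mem_span_singleton_pow hp hμ) hy
  · rw [pow_succ]
    exact Ideal.mul_mem_mul (Ideal.pow_mem_pow (Ideal.mem_span_singleton_self μ) p) hfermat

end

theorem AdjoinRoot.exists_intCast_sub_mem_span_root_sub_one {f : ℤ[X]} (r : AdjoinRoot f) :
    ∃ n : ℤ, r - n ∈ Ideal.span {root f - 1} := by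
  obtain ⟨g, rfl⟩ := mk_surjective r
  refine ⟨g.eval 1, Ideal.mem_span_singleton.2 ?_⟩
  have h := sub_dvd_eval_sub (root f) 1 (g.map (of f))
  rwa [eval_map, ← algebraMap_eq, ← aeval_def, aeval_eq, eval_one_map, eq_intCast] at h

theorem mCyc_eq_span_zetaCyc_sub_one (p : ℕ) : mCyc p = Ideal.span {zetaCyc p - 1} := by
  rw [mCyc, ← neg_sub]
  exact Ideal.span_singleton_neg _

theorem isRoot_cyclotomic_zetaCyc (p : ℕ) :
    (cyclotomic p (cycIntRing p)).IsRoot (zetaCyc p) := by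
  have h := AdjoinRoot.isRoot_root (cyclotomic p ℤ)
  rwa [map_cyclotomic] at h

/-- for every `y ∈ 𝔪 = (1 - ζ)` in `ℤ[ζ_p]`, `(1 + y)^p - 1 ∈ 𝔪^{p+1}`;
equivalently, in `R/𝔪^{p+1}` every element of `1 + 𝔪̄` has `p`-th power `1`. -/
theorem one_add_pow_p_sub_one_mem (p : ℕ) (hp : p.Prime) :
    (∀ y ∈ mCyc p, (1 + y) ^ p - 1 ∈ mCyc p ^ (p + 1)) ∧
    (∀ y ∈ mCyc p, (Ideal.Quotient.mk (mCyc p ^ (p + 1)) (1 + y)) ^ p = 1) := by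
  have hmem : ∀ y ∈ mCyc p, (1 + y) ^ p - 1 ∈ mCyc p ^ (p + 1) := by
    rw [mCyc_eq_span_zetaCyc_sub_one]
    exact fun y ↦ one_add_pow_prime_sub_one_mem_span_singleton_pow hp
      (by rw [sub_add_cancel]; exact isRoot_cyclotomic_zetaCyc p)
      AdjoinRoot.exists_intCast_sub_mem_span_root_sub_one
  refine ⟨hmem, fun y hy ↦ ?_⟩
  rw [← map_pow, ← map_one (Ideal.Quotient.mk _)]
  exact Ideal.Quotient.eq.2 (hmem y hy)
end

section
/- Let p be a prime, let R = ℤ[X]/(Φ_p(X)) where Φ_p is the p-th cyclotomic polynomial, let ζ ∈ R be the image of X, and let 𝔪 = (1 - ζ). Then the image of 1 - ζ in the quotient ring R/𝔪^{p+1} has additive order exactly p²: that is, p·(1-ζ) ∉ 𝔪^{p+1} but p²·(1-ζ) ∈ 𝔪^{p+1}. -/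
open Polynomial

namespace IsPrimitiveRoot

variable {R : Type*} [CommRing R] [IsDomain R] {ζ : R} {p : ℕ}

theorem associated_one_sub_pow_prime (hp : p.Prime) (hζ : IsPrimitiveRoot ζ p) :
    Associated ((1 - ζ) ^ (p - 1)) (p : R) := by
  obtain ⟨n, rfl⟩ := Nat.exists_eq_add_one_of_ne_zero hp.ne_zero
  have hfactor : ∀ k ∈ Finset.range n, Associated (1 - ζ) (1 - ζ ^ (k + 1)) := by
    intro k hk
    have hcop : (k + 1).Coprime (n + 1) := (Nat.coprime_of_lt_prime k.succ_ne_zero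
      (Nat.succ_lt_succ (Finset.mem_range.mp hk)) hp).symm
    simpa using (hζ.associated_sub_one_pow_sub_one_of_coprime hcop).neg_left.neg_right
  have := Associated.prod _ _ _ hfactor
  rwa [Finset.prod_const, Finset.card_range, hζ.prod_one_sub_pow_eq_order, ← Nat.cast_succ]
    at this

end IsPrimitiveRoot

theorem mul_pow_mem_span_singleton_pow_iff {R : Type*} [CommSemiring R] [IsDomain R] {π a : R}
    {k m n : ℕ} (hπ₀ : π ≠ 0) (hπ : ¬IsUnit π) (ha : Associated (π ^ k) a) :
    a ^ m * π ∈ Ideal.span {π} ^ n ↔ n ≤ k * m + 1 := by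
  have hassoc : Associated (π ^ (k * m + 1)) (a ^ m * π) := by
    rw [pow_succ, pow_mul]
    exact ha.pow_pow.mul_right π
  rw [Ideal.span_singleton_pow, Ideal.mem_span_singleton, ← hassoc.dvd_iff_dvd_right,
    pow_dvd_pow_iff hπ₀ hπ]

/-! `cycIntRing p` unfolds to `AdjoinRoot (cyclotomic p ℤ)` and `zetaCyc p` to its root, so the
`AdjoinRoot` API applies to them. -/

section cycIntRing

variable {p : ℕ}

theorem isDomain_cycIntRing (hp : 0 < p) : IsDomain (cycIntRing p) :=
  AdjoinRoot.isDomain_of_prime (cyclotomic.irreducible hp).prime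

theorem natCast_cycIntRing_ne_zero (hp : 0 < p) {n : ℕ} (hn : n ≠ 0) :
    (n : cycIntRing p) ≠ 0 := by
  have hinj := AdjoinRoot.of.injective_of_degree_ne_zero (f := cyclotomic p ℤ)
    (by rw [degree_cyclotomic]; exact_mod_cast (Nat.totient_pos.2 hp).ne')
  have := (map_ne_zero_iff _ hinj).2 (Int.natCast_ne_zero.2 hn)
  rwa [map_natCast] at this

theorem isPrimitiveRoot_zetaCyc (hp : 0 < p) : IsPrimitiveRoot (zetaCyc p) p := by
  have := isDomain_cycIntRing hp
  have : NeZero (p : cycIntRing p) := ⟨natCast_cycIntRing_ne_zero hp hp.ne'⟩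
  have := AdjoinRoot.isRoot_root (cyclotomic p ℤ)
  rw [map_cyclotomic] at this
  exact isRoot_cyclotomic_iff.1 this

theorem not_isUnit_natCast_cycIntRing (hp : p.Prime) : ¬IsUnit (p : cycIntRing p) := by
  have : Fact p.Prime := ⟨hp⟩
  have hroot : (cyclotomic p ℤ).eval₂ (Int.castRingHom (ZMod p)) 1 = 0 := by
    simp [eval₂_at_one, eval_one_cyclotomic_prime]
  have hp0 : AdjoinRoot.lift _ _ hroot (p : cycIntRing p) = 0 :=
    (map_natCast _ p).trans (ZMod.natCast_self p)
  intro h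
  apply not_isUnit_zero (M₀ := ZMod p)
  rw [← hp0]
  exact h.map _

end cycIntRing

/-- the image of `1 - ζ` in `ℤ[ζ_p]/𝔪^{p+1}` has additive order exactly `p²`;
that is, `p·(1 - ζ) ∉ 𝔪^{p+1}` but `p²·(1 - ζ) ∈ 𝔪^{p+1}`. -/
theorem addOrderOf_one_sub_zeta (p : ℕ) (hp : p.Prime) :
    addOrderOf (Ideal.Quotient.mk (mCyc p ^ (p + 1)) (1 - zetaCyc p)) = p ^ 2 ∧
    (p : cycIntRing p) * (1 - zetaCyc p) ∉ mCyc p ^ (p + 1) ∧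
    (p : cycIntRing p) ^ 2 * (1 - zetaCyc p) ∈ mCyc p ^ (p + 1) := by
  have := isDomain_cycIntRing hp.pos
  have : Fact p.Prime := ⟨hp⟩
  have hζ := isPrimitiveRoot_zetaCyc hp.pos
  have hassoc := hζ.associated_one_sub_pow_prime hp
  have hπ₀ : 1 - zetaCyc p ≠ 0 := sub_ne_zero.2 (hζ.ne_one hp.one_lt).symm
  have hπ : ¬IsUnit (1 - zetaCyc p) := fun h ↦
    not_isUnit_natCast_cycIntRing hp (hassoc.isUnit_iff.1 (h.pow _))
  have hnotMem : (p : cycIntRing p) * (1 - zetaCyc p) ∉ mCyc p ^ (p + 1) := by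
    have := (mul_pow_mem_span_singleton_pow_iff hπ₀ hπ hassoc (m := 1) (n := p + 1)).not
    rw [pow_one] at this
    exact this.2 (by have := hp.pos; omega)
  have hmem : (p : cycIntRing p) ^ 2 * (1 - zetaCyc p) ∈ mCyc p ^ (p + 1) :=
    (mul_pow_mem_span_singleton_pow_iff hπ₀ hπ hassoc).2 (by have := hp.two_le; omega)
  refine ⟨addOrderOf_eq_prime_pow ?_ ?_, hnotMem, hmem⟩ <;>
    rw [← map_nsmul, Ideal.Quotient.eq_zero_iff_mem, nsmul_eq_mul, Nat.cast_pow]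
  · simpa using hnotMem
  · exact hmem
end

section
/- Let p be a prime and let S = F_p[X]/(X^{p+1}). Let G be the kernel of the group homomorphism S^× → F_p^× induced on unit groups by the ring homomorphism S → F_p sending X to 0 (so G consists of the units of S congruent to 1 modulo the image of X). Then G is isomorphic, as an abstract group, to ℤ/p²ℤ × (ℤ/pℤ)^{p-2}. In particular, the unit 1 + X has multiplicative order exactly p². -/
/-- The ring `S = F_p[X]/(X^{p+1})`. -/
abbrev truncPolyRing (p : ℕ) : Type :=
  Polynomial (ZMod p) ⧸ Ideal.span {(Polynomial.X : Polynomial (ZMod p)) ^ (p + 1)}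

/-- The ring homomorphism `S → F_p` sending `X` to `0`. -/
noncomputable def truncPolyEval (p : ℕ) : truncPolyRing p →+* ZMod p :=
  Ideal.Quotient.lift _ (Polynomial.evalRingHom 0) (by
    intro a ha
    rw [Ideal.mem_span_singleton] at ha
    obtain ⟨c, rfl⟩ := ha
    simp [pow_succ])

/-!
Write `x` for the image of `X` in `S`. Since `x` is nilpotent, `a ↦ 1 + a` identifies the
kernel `xS` of `S → F_p` with `G`, so `|G| = p^p`. In characteristic `p`,
`(1 + x^k)^p = 1 + x^{kp}`; hence `1 + x` has order `p²` and `1 + x^k` has order `p` for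
`2 ≤ k ≤ p - 1`. These elements are independent: writing the exponent `c < p²` of `1 + x` as
`c₀ + p c₁` and using `(1 + x)^p = 1 + x^p` turns a relation into
`∏_{k=1}^{p} (1 + x^k)^{e_k} = 1` with all `e_k < p`, and if `k` is the least index with
`e_k ≠ 0`, the product is `1 + e_k x^k` modulo `x^{k+1}`. So the homomorphism
`ℤ/p² × (ℤ/p)^{p-2} → G` they define is injective, hence bijective by counting.
-/

open Polynomial Function

theorem one_add_pow_of_mul_self_eq_zero {A : Type*} [CommSemiring A] {y : A} (hy : y * y = 0)
    (n : ℕ) : (1 + y) ^ n = 1 + n * y := by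
  induction n with
  | zero => simp
  | succ n ih =>
    calc (1 + y) ^ (n + 1) = (1 + n * y) * (1 + y) := by rw [pow_succ, ih]
      _ = 1 + (n + 1) * y + n * (y * y) := by ring
      _ = 1 + ↑(n + 1) * y := by rw [hy, mul_zero, add_zero, Nat.cast_succ]

theorem prod_one_add_pow_pow_eq_of_pow_succ_eq_zero {ι A : Type*} [Fintype ι] [CommSemiring A]
    {t : A} {d e : ι → ℕ} (hd : Injective d) {i : ι} (hi : 1 ≤ d i) (ht : t ^ (d i + 1) = 0)
    (he : ∀ j, d j < d i → e j = 0) :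
    ∏ j, (1 + t ^ d j) ^ e j = 1 + e i * t ^ d i := by
  rw [Fintype.prod_eq_single i fun j hj => ?_]
  · refine one_add_pow_of_mul_self_eq_zero ?_ _
    rw [← pow_add]
    exact pow_eq_zero_of_le (by omega) ht
  · rcases lt_or_gt_of_ne (hd.ne hj) with hlt | hgt
    · rw [he j hlt, pow_zero]
    · rw [pow_eq_zero_of_le hgt ht, add_zero, one_pow]

theorem natCast_eq_zero_of_X_pow_dvd_prod_sub_one {ι R : Type*} [Fintype ι] [CommRing R]
    {d e : ι → ℕ} (hd : Injective d) {i : ι} (hi : 1 ≤ d i) (he : ∀ j, d j < d i → e j = 0)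
    (hdvd : (X : R[X]) ^ (d i + 1) ∣ ∏ j, (1 + X ^ d j) ^ e j - 1) : (e i : R) = 0 := by
  set π := Ideal.Quotient.mk (Ideal.span {(X : R[X]) ^ (d i + 1)})
  have hX : π X ^ (d i + 1) = 0 := by
    rw [← map_pow, Ideal.Quotient.eq_zero_iff_mem]
    exact Ideal.mem_span_singleton_self _
  have hprod : π (∏ j, (1 + X ^ d j) ^ e j) = π 1 := by
    rwa [Ideal.Quotient.eq, Ideal.mem_span_singleton]
  simp only [map_prod, map_pow, map_add, map_one,
    prod_one_add_pow_pow_eq_of_pow_succ_eq_zero hd hi hX he, add_eq_left] at hprod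
  have hdvd' : (X : R[X]) ^ (d i + 1) ∣ (e i : R[X]) * X ^ d i := by
    rwa [← Ideal.mem_span_singleton, ← Ideal.Quotient.eq_zero_iff_mem, map_mul, map_pow,
      map_natCast]
  simpa using X_pow_dvd_iff.mp hdvd' (d i) (lt_add_one _)

theorem eq_zero_of_X_pow_dvd_prod_sub_one {ι : Type*} [Fintype ι] {p n : ℕ} {d e : ι → ℕ}
    (hd : Injective d) (hd1 : ∀ i, 1 ≤ d i) (hdn : ∀ i, d i ≤ n) (hep : ∀ i, e i < p)
    (hdvd : (X : (ZMod p)[X]) ^ (n + 1) ∣ ∏ i, (1 + X ^ d i) ^ e i - 1) : e = 0 := by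
  suffices ∀ k i, d i = k → e i = 0 from funext fun i => this _ i rfl
  intro k
  induction k using Nat.strong_induction_on with
  | _ k ih =>
    rintro i rfl
    have hcast := natCast_eq_zero_of_X_pow_dvd_prod_sub_one hd (hd1 i)
      (fun j hj => ih _ hj j rfl) ((pow_dvd_pow _ (by linarith [hdn i])).trans hdvd)
    rw [ZMod.natCast_eq_zero_iff] at hcast
    exact Nat.eq_zero_of_dvd_of_lt hcast (hep i)

section RingHom

variable {A B : Type*} [CommRing A] [CommRing B] (f : A →+* B)

noncomputable def unitsMapKerEquivKer (hf : ∀ a ∈ RingHom.ker f, IsNilpotent a) :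
    (Units.map f.toMonoidHom).ker ≃ RingHom.ker f where
  toFun u := ⟨((u : Aˣ) : A) - 1, by
    have := congrArg Units.val u.2
    simp_all [RingHom.mem_ker]⟩
  invFun a := ⟨(hf a a.2).isUnit_one_add.unit, by
    ext
    simp [RingHom.mem_ker.mp a.2]⟩
  left_inv u := by ext; simp
  right_inv a := by ext; simp

theorem RingHom.card_ker_mul_card_of_surjective (hf : Surjective f) :
    Nat.card (RingHom.ker f) * Nat.card B = Nat.card A := by
  have := f.toAddMonoidHom.ker.card_mul_index
  rwa [AddSubgroup.index_ker, AddMonoidHom.range_eq_top.mpr hf, AddSubgroup.card_top] at this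

end RingHom

section ZModProd

variable {G : Type*} [CommGroup G] {ι : Type*} [Fintype ι] {n m : ℕ} [NeZero n] [NeZero m]

theorem pow_zmod_val_add {g : G} (hg : g ^ n = 1) (a b : ZMod n) :
    g ^ (a + b).val = g ^ a.val * g ^ b.val := by
  rw [ZMod.val_add, ← pow_eq_pow_mod _ hg, pow_add]

def zmodProdPowHom (g : G) (hg : g ^ n = 1) (h : ι → G) (hh : ∀ i, h i ^ m = 1) :
    Multiplicative (ZMod n × (ι → ZMod m)) →* G where
  toFun z := g ^ z.toAdd.1.val * ∏ i, h i ^ (z.toAdd.2 i).val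
  map_one' := by simp
  map_mul' z w := by
    simp only [toAdd_mul, Prod.fst_add, Prod.snd_add, Pi.add_apply, pow_zmod_val_add hg,
      pow_zmod_val_add (hh _), Finset.prod_mul_distrib]
    exact mul_mul_mul_comm _ _ _ _

theorem nonempty_mulEquiv_zmod_prod [Finite G] (g : G) (hg : g ^ n = 1) (h : ι → G)
    (hh : ∀ i, h i ^ m = 1)
    (hind : ∀ (c : ℕ) (b : ι → ℕ), c < n → (∀ i, b i < m) → g ^ c * ∏ i, h i ^ b i = 1 →
      c = 0 ∧ b = 0)
    (hcard : Nat.card G = n * m ^ Fintype.card ι) :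
    Nonempty (G ≃* Multiplicative (ZMod n × (ι → ZMod m))) := by
  have hinj : Injective (zmodProdPowHom g hg h hh) := by
    refine (injective_iff_map_eq_one _).mpr fun z hz => ?_
    obtain ⟨hc, hb⟩ := hind _ (fun i => (z.toAdd.2 i).val) (ZMod.val_lt _)
      (fun i => ZMod.val_lt _) hz
    rw [← toAdd_eq_zero]
    exact Prod.ext ((ZMod.val_eq_zero _).mp hc)
      (funext fun i => (ZMod.val_eq_zero _).mp (congrFun hb i))
  have hbij : Bijective (zmodProdPowHom g hg h hh) := by
    refine (Nat.bijective_iff_injective_and_card _).mpr ⟨hinj, ?_⟩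
    simp [Nat.card_congr Multiplicative.toAdd, Nat.card_fun, hcard]
  exact ⟨(MulEquiv.ofBijective _ hbij).symm⟩

end ZModProd

section TruncPoly

variable (p : ℕ)

noncomputable def truncPolyX : truncPolyRing p := Ideal.Quotient.mk _ X

theorem truncPolyX_pow_mem_ker {k : ℕ} (hk : k ≠ 0) :
    truncPolyX p ^ k ∈ RingHom.ker (truncPolyEval p) := by
  simp [truncPolyX, truncPolyEval, hk]

theorem eq_zero_of_prod_one_add_truncPolyX_pow_pow_eq_one {ι : Type*} [Fintype ι]
    {d e : ι → ℕ} (hd : Injective d) (hd1 : ∀ i, 1 ≤ d i) (hdp : ∀ i, d i ≤ p)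
    (hep : ∀ i, e i < p) (h : ∏ i, (1 + truncPolyX p ^ d i) ^ e i = 1) : e = 0 := by
  refine eq_zero_of_X_pow_dvd_prod_sub_one hd hd1 hdp hep ?_
  rw [← Ideal.mem_span_singleton, ← Ideal.Quotient.eq, map_one]
  simpa [truncPolyX] using h

variable [Fact p.Prime]

theorem truncPolyX_pow_eq_zero_iff {k : ℕ} : truncPolyX p ^ k = 0 ↔ p + 1 ≤ k := by
  rw [truncPolyX, ← map_pow, Ideal.Quotient.eq_zero_iff_mem, Ideal.mem_span_singleton]
  exact pow_dvd_pow_iff X_ne_zero not_isUnit_X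

instance : Finite (truncPolyRing p) :=
  have := (monic_X_pow (R := ZMod p) (p + 1)).finite_quotient
  Module.finite_of_finite (ZMod p)

instance : CharP (truncPolyRing p) p :=
  have : Nontrivial (truncPolyRing p) :=
    Ideal.Quotient.nontrivial_iff.mpr (by simp [Ideal.span_singleton_eq_top, not_isUnit_X])
  charP_of_injective_algebraMap (algebraMap (ZMod p) (truncPolyRing p)).injective p

theorem card_truncPolyRing : Nat.card (truncPolyRing p) = p ^ (p + 1) := by
  have := (monic_X_pow (R := ZMod p) (p + 1)).finite_quotient
  rw [Module.natCard_eq_pow_finrank (K := ZMod p), finrank_quotient_span_eq_natDegree]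
  simp

theorem isNilpotent_of_mem_ker_truncPolyEval {a : truncPolyRing p}
    (ha : a ∈ RingHom.ker (truncPolyEval p)) : IsNilpotent a := by
  obtain ⟨g, rfl⟩ := Ideal.Quotient.mk_surjective a
  obtain ⟨q, rfl⟩ : X ∣ g :=
    X_dvd_iff.mpr (by simpa [truncPolyEval, coeff_zero_eq_eval_zero] using ha)
  refine ⟨p + 1, ?_⟩
  rw [map_mul, mul_pow, ← truncPolyX, (truncPolyX_pow_eq_zero_iff p).mpr le_rfl, zero_mul]

theorem card_ker_truncPolyEval : Nat.card (RingHom.ker (truncPolyEval p)) = p ^ p := by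
  have hsurj : Surjective (truncPolyEval p) := fun c =>
    ⟨Ideal.Quotient.mk _ (C c), by simp [truncPolyEval]⟩
  have := (truncPolyEval p).card_ker_mul_card_of_surjective hsurj
  rw [Nat.card_zmod, card_truncPolyRing] at this
  exact Nat.eq_of_mul_eq_mul_right (Fact.out : p.Prime).pos (this.trans (pow_succ p p))

theorem one_add_truncPolyX_pow_char_pow (k : ℕ) :
    (1 + truncPolyX p) ^ p ^ k = 1 + truncPolyX p ^ p ^ k := by
  rw [add_pow_char_pow, one_pow]

theorem orderOf_one_add_truncPolyX : orderOf (1 + truncPolyX p) = p ^ 2 := by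
  have hp := (Fact.out : p.Prime).two_le
  refine orderOf_eq_prime_pow (n := 1) ?_ ?_ <;>
    rw [one_add_truncPolyX_pow_char_pow, add_eq_left, truncPolyX_pow_eq_zero_iff]
  · rw [pow_one]
    omega
  · show p + 1 ≤ p ^ 2
    nlinarith

theorem one_add_truncPolyX_pow_pow_char {k : ℕ} (hk : 2 ≤ k) :
    (1 + truncPolyX p ^ k) ^ p = 1 := by
  rw [add_pow_char, one_pow, ← pow_mul, (truncPolyX_pow_eq_zero_iff p).mpr, add_zero]
  nlinarith [(Fact.out : p.Prime).two_le]

theorem eq_zero_of_one_add_truncPolyX_pow_mul_prod_eq_one {c : ℕ} {b : Fin (p - 2) → ℕ}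
    (hc : c < p ^ 2) (hb : ∀ i, b i < p)
    (h : (1 + truncPolyX p) ^ c *
      ∏ i : Fin (p - 2), (1 + truncPolyX p ^ ((i : ℕ) + 2)) ^ b i = 1) :
    c = 0 ∧ b = 0 := by
  have hp := (Fact.out : p.Prime).two_le
  let d : Fin (p - 2) ⊕ Fin 2 → ℕ := Sum.elim (fun i => i + 2) ![1, p]
  let e : Fin (p - 2) ⊕ Fin 2 → ℕ := Sum.elim b ![c % p, c / p]
  have hd : Injective d := by
    refine Injective.sumElim (fun i j hij => Fin.ext (by simpa using hij)) ?_ fun i j => ?_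
    · intro i j hij
      fin_cases i <;> fin_cases j <;> simp at hij ⊢ <;> omega
    · fin_cases j <;> simp
      omega
  have he : e = 0 := by
    refine eq_zero_of_prod_one_add_truncPolyX_pow_pow_eq_one p hd ?_ ?_ ?_ ?_
    · simp only [Sum.forall, Fin.forall_fin_two, d, Sum.elim_inl, Sum.elim_inr,
        Matrix.cons_val_zero, Matrix.cons_val_one]
      exact ⟨fun i => by omega, le_rfl, by omega⟩
    · simp only [Sum.forall, Fin.forall_fin_two, d, Sum.elim_inl, Sum.elim_inr,
        Matrix.cons_val_zero, Matrix.cons_val_one]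
      exact ⟨fun i => by omega, by omega, le_rfl⟩
    · simp only [Sum.forall, Fin.forall_fin_two, e, Sum.elim_inl, Sum.elim_inr,
        Matrix.cons_val_zero, Matrix.cons_val_one]
      exact ⟨hb, Nat.mod_lt c (by omega), Nat.div_lt_of_lt_mul (by rwa [← sq])⟩
    · have hfrob : (1 + truncPolyX p) ^ p = 1 + truncPolyX p ^ p := by
        simpa using one_add_truncPolyX_pow_char_pow p 1
      refine Eq.trans ?_ h
      rw [← Nat.mod_add_div c p, pow_add (1 + truncPolyX p), pow_mul (1 + truncPolyX p), hfrob]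
      simp [d, e, Fintype.prod_sum_type]
      ring
  have h0 : c % p = 0 := congrFun he (.inr 0)
  have h1 : c / p = 0 := congrFun he (.inr 1)
  refine ⟨?_, funext fun i => congrFun he (.inl i)⟩
  rw [← Nat.mod_add_div c p, h0, h1, mul_zero, add_zero]

end TruncPoly

/-- the kernel `G` of `S^× → F_p^×`, for `S = F_p[X]/(X^{p+1})`, is
isomorphic to `ℤ/p²ℤ × (ℤ/pℤ)^{p-2}`; in particular `1 + X` has multiplicative order
exactly `p²`. -/
theorem units_ker_iso_and_orderOf (p : ℕ) (hp : p.Prime) :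
    Nonempty ((MonoidHom.ker (Units.map (truncPolyEval p).toMonoidHom)) ≃*
        Multiplicative (ZMod (p ^ 2) × (Fin (p - 2) → ZMod p))) ∧
    orderOf ((1 : truncPolyRing p) +
        Ideal.Quotient.mk (Ideal.span {(Polynomial.X : Polynomial (ZMod p)) ^ (p + 1)})
          Polynomial.X) = p ^ 2 := by
  have : Fact p.Prime := ⟨hp⟩
  refine ⟨?_, orderOf_one_add_truncPolyX p⟩
  let G := (Units.map (truncPolyEval p).toMonoidHom).ker
  let e := unitsMapKerEquivKer (truncPolyEval p) fun _ => isNilpotent_of_mem_ker_truncPolyEval p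
  let val : G →* truncPolyRing p := (Units.coeHom _).comp G.subtype
  have hval : Injective val := fun _ _ h => Subtype.ext (Units.ext h)
  let oneAddX (k : ℕ) (hk : k ≠ 0) : G := e.symm ⟨_, truncPolyX_pow_mem_ker p hk⟩
  have hval_oneAddX (k : ℕ) (hk : k ≠ 0) : val (oneAddX k hk) = 1 + truncPolyX p ^ k := rfl
  refine nonempty_mulEquiv_zmod_prod (oneAddX 1 one_ne_zero) (hval ?_)
    (fun i => oneAddX (i + 2) (by omega)) (fun i => hval ?_) (fun c b hc hb h => ?_) ?_
  · rw [map_pow, hval_oneAddX 1 one_ne_zero, pow_one, ← orderOf_one_add_truncPolyX p,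
      pow_orderOf_eq_one, map_one]
  · rw [map_pow, hval_oneAddX _ (by omega), one_add_truncPolyX_pow_pow_char p (by omega), map_one]
  · refine eq_zero_of_one_add_truncPolyX_pow_mul_prod_eq_one p hc hb ?_
    simpa only [map_mul, map_pow, map_prod, hval_oneAddX, pow_one, map_one] using congrArg val h
  · rw [Nat.card_congr e, card_ker_truncPolyEval, Fintype.card_fin, ← pow_add]
    congr 1
    have := hp.two_le
    omega
end
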